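/- arXiv:1404.6766 — 6 statements merged into one kernel-verified Lean document; each statement's English description precedes it below -/
import Mathlib

section
/- There exists exactly one family (t_{s,j})_{1≤s≤d, 1≤j≤n} of nonnegative reals that is a solution of the system (dist)–(ne2); that is, a solution exists and any two solutions coincide. -/
/-!
The system is solved column by column, from `j = n` down to `j = 1`. Once the columns `k > j` are
fixed, column `j` is a water-filling problem on the simplex with base points `γ_{s,j+1}`, and the
base values `M_s W(γ_{s,j+1})` are antitone in `s`: they are the levels of column `j + 1` (for
`j = n`, they are the `M_s`). With antitone base values, water-filling columns are exactly the
points of the simplex at which every coordinate in the support maximises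
`s ↦ M_s W(γ_{s,j+1} + x_s q_j)`.

Such a point exists: a maximiser of the potential `∑_s ∫_0^{x_s} M_s W(γ_{s,j+1} + u q_j) du` over
the compact simplex is one, because moving mass from a coordinate in the support to another one
cannot increase the potential. It is unique because `W` is strictly decreasing on `[0, 1]` (the
derivative of the binomial tail `w` is a positive multiple of a Bernstein polynomial): of two such
points, the one with the lower level dominates the other coordinatewise, and both sum to `1`.
-/

/-- Probability of at least `m` successes in `l-1` Bernoulli(x) trials. -/
noncomputable def w (l m : ℕ) (x : ℝ) : ℝ :=
  ∑ i ∈ Finset.Icc m (l - 1), ((l - 1).choose i : ℝ) * x ^ i * (1 - x) ^ (l - 1 - i)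

/-- `W x = 1 - w x`. -/
noncomputable def W (l m : ℕ) (x : ℝ) : ℝ := 1 - w l m x

/-- `γ_{s,j} = ∑_{k=j}^n t_{s,k} q_k`. -/
noncomputable def gam (n : ℕ) (q : ℕ → ℝ) (t : ℕ → ℕ → ℝ) (s j : ℕ) : ℝ :=
  ∑ k ∈ Finset.Icc j n, t s k * q k

/-- `(t_{s,j})` is a solution of the system (dist)–(ne2). -/
def IsSolution (l m d n : ℕ) (M q : ℕ → ℝ) (t : ℕ → ℕ → ℝ) : Prop :=
  (∀ s ∈ Finset.Icc 1 d, ∀ j ∈ Finset.Icc 1 n, 0 ≤ t s j) ∧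
  ∀ j ∈ Finset.Icc 1 n,
    (∑ s ∈ Finset.Icc 1 d, t s j) = 1 ∧
    ∃ dj ∈ Finset.Icc 1 d,
      (∀ s ∈ Finset.Icc 1 d, s ≤ dj → 0 < t s j) ∧
      (∀ s ∈ Finset.Icc 1 d, dj < s → t s j = 0) ∧
      (∀ s ∈ Finset.Icc 1 dj,
        M s * W l m (gam n q t s j) = M 1 * W l m (gam n q t 1 j)) ∧
      (∀ s, dj ≤ s → s < d →
        M (s + 1) * W l m (gam n q t (s + 1) j) ≤ M s * W l m (gam n q t s j))

open Finset

section BinomialTail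

variable {l m : ℕ}

theorem derivative_sum_bernsteinPolynomial_Icc {n k : ℕ} (hk : k ≤ n) :
    Polynomial.derivative (∑ i ∈ Icc (k + 1) (n + 1), bernsteinPolynomial ℝ (n + 1) i) =
      ↑(n + 1) * bernsteinPolynomial ℝ n k := by
  have htelescope : ∑ i ∈ Icc k n, (bernsteinPolynomial ℝ n i - bernsteinPolynomial ℝ n (i + 1)) =
      bernsteinPolynomial ℝ n k := by
    rw [← Ico_add_one_right_eq_Icc, ← neg_inj, ← sum_neg_distrib]
    simp only [neg_sub]
    rw [sum_Ico_sub _ (by omega), bernsteinPolynomial.eq_zero_of_lt ℝ (Nat.lt_add_one n), zero_sub]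
  rw [Polynomial.derivative_sum, ← map_add_right_Icc, sum_map]
  simp only [addRightEmbedding_apply, bernsteinPolynomial.derivative_succ, add_tsub_cancel_right,
    ← mul_sum, htelescope]

lemma w_eq_eval_sum_bernsteinPolynomial (l m : ℕ) :
    w l m = fun x ↦ (∑ i ∈ Icc m (l - 1), bernsteinPolynomial ℝ (l - 1) i).eval x := by
  ext x
  simp [w, bernsteinPolynomial, Polynomial.eval_finsetSum]

lemma w_strictMonoOn (hm : 1 ≤ m) (hml : m ≤ l - 1) : StrictMonoOn (w l m) (Set.Icc 0 1) := by
  obtain ⟨k, rfl⟩ : ∃ k, m = k + 1 := ⟨m - 1, by omega⟩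
  obtain ⟨n, hn⟩ : ∃ n, l - 1 = n + 1 := ⟨l - 2, by omega⟩
  rw [w_eq_eval_sum_bernsteinPolynomial, hn]
  refine strictMonoOn_of_deriv_pos (convex_Icc 0 1) (Polynomial.continuousOn _) fun x hx ↦ ?_
  rw [interior_Icc] at hx
  obtain ⟨hx0, hx1⟩ := hx
  have hchoose : (0 : ℝ) < n.choose k := by exact_mod_cast Nat.choose_pos (by omega)
  have hx1' : (0 : ℝ) < 1 - x := by linarith
  rw [Polynomial.deriv, derivative_sum_bernsteinPolynomial_Icc (by omega)]
  simp only [bernsteinPolynomial, Polynomial.eval_mul, Polynomial.eval_natCast,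
    Polynomial.eval_pow, Polynomial.eval_X, Polynomial.eval_sub, Polynomial.eval_one]
  positivity

lemma W_strictAntiOn (hm : 1 ≤ m) (hml : m ≤ l - 1) : StrictAntiOn (W l m) (Set.Icc 0 1) :=
  fun _ hx _ hy hxy ↦ sub_lt_sub_left (w_strictMonoOn hm hml hx hy hxy) 1

lemma continuous_W (l m : ℕ) : Continuous (W l m) := by
  unfold W w
  fun_prop

lemma W_zero (hm : 1 ≤ m) : W l m 0 = 1 := by
  simp only [W, w, sub_eq_self]
  exact sum_eq_zero fun i hi ↦ by simp [(by grind : i ≠ 0)]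

end BinomialTail

lemma exists_pos_of_sum_eq_one {ι : Type*} {s : Finset ι} {x : ι → ℝ} (h : ∑ i ∈ s, x i = 1) :
    ∃ i ∈ s, 0 < x i :=
  exists_lt_of_sum_lt (f := 0) (by simp [h])

def IsMaxOnSupport (d : ℕ) (x V : ℕ → ℝ) : Prop :=
  ∀ s ∈ Icc 1 d, 0 < x s → ∀ r ∈ Icc 1 d, V r ≤ V s

def IsWaterFilling (d : ℕ) (x V : ℕ → ℝ) : Prop :=
  ∃ dj ∈ Icc 1 d,
    (∀ s ∈ Icc 1 d, s ≤ dj → 0 < x s) ∧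
    (∀ s ∈ Icc 1 d, dj < s → x s = 0) ∧
    (∀ s ∈ Icc 1 dj, V s = V 1) ∧
    (∀ s, dj ≤ s → s < d → V (s + 1) ≤ V s)

namespace IsWaterFilling

variable {d : ℕ} {x V : ℕ → ℝ}

theorem antitoneOn (h : IsWaterFilling d x V) : AntitoneOn V (Set.Icc 1 d) := by
  obtain ⟨dj, hdj, -, -, hlevel, hchain⟩ := h
  refine antitoneOn_of_succ_le Set.ordConnected_Icc fun a _ ha ha' ↦ ?_
  rw [Order.succ_eq_add_one] at ha' ⊢
  rcases lt_or_ge a dj with had | had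
  · rw [hlevel a (by grind), hlevel (a + 1) (by grind)]
  · exact hchain a had (by grind)

theorem isMaxOnSupport (h : IsWaterFilling d x V) : IsMaxOnSupport d x V := by
  have hanti := h.antitoneOn
  obtain ⟨dj, hdj, -, hzero, hlevel, -⟩ := h
  intro s hs hxs r hr
  have hsdj : s ≤ dj := by_contra fun h ↦ hxs.ne' (hzero s hs (by omega))
  rw [hlevel s (by grind)]
  exact hanti (by grind) (by grind) (mem_Icc.1 hr).1

theorem congr {V' : ℕ → ℝ} (h : IsWaterFilling d x V) (hV : ∀ s ∈ Icc 1 d, V s = V' s) :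
    IsWaterFilling d x V' := by
  obtain ⟨dj, hdj, hpos, hzero, hlevel, hchain⟩ := h
  refine ⟨dj, hdj, hpos, hzero, fun s hs ↦ ?_, fun s hs hsd ↦ ?_⟩
  · rw [← hV s (by grind), ← hV 1 (by grind)]
    exact hlevel s hs
  · rw [← hV s (by grind), ← hV (s + 1) (by grind)]
    exact hchain s hs hsd

end IsWaterFilling

namespace IsMaxOnSupport

variable {d : ℕ} {x V : ℕ → ℝ}

theorem isWaterFilling (h : IsMaxOnSupport d x V) (hx : ∀ s ∈ Icc 1 d, 0 ≤ x s)
    (hsupp : ∃ s ∈ Icc 1 d, 0 < x s) {V₀ : ℕ → ℝ} (hV₀ : AntitoneOn V₀ (Set.Icc 1 d))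
    (hzero : ∀ s ∈ Icc 1 d, x s = 0 → V s = V₀ s) (hpos : ∀ s ∈ Icc 1 d, 0 < x s → V s < V₀ s) :
    IsWaterFilling d x V := by
  set P := (Icc 1 d).filter (0 < x ·)
  have hP : P.Nonempty := by simpa [P, Finset.Nonempty] using hsupp
  obtain ⟨hdj, hxdj⟩ := mem_filter.1 (P.max'_mem hP)
  set dj := P.max' hP
  have hzero' : ∀ s ∈ Icc 1 d, dj < s → x s = 0 := fun s hs hlt ↦
    (hx s hs).eq_or_lt.elim Eq.symm fun hxs ↦
      absurd (P.le_max' s (mem_filter.2 ⟨hs, hxs⟩)) (by omega)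
  have hpos' : ∀ s ∈ Icc 1 d, s ≤ dj → 0 < x s := fun s hs hsdj ↦
    (hx s hs).lt_of_ne' fun hxs ↦
      (calc V s = V₀ s := hzero s hs hxs
        _ ≥ V₀ dj := hV₀ (by grind) (by grind) hsdj
        _ > V dj := hpos dj hdj hxdj
        _ ≥ V s := h dj hdj hxdj s hs).false
  refine ⟨dj, hdj, hpos', hzero', fun s hs ↦ ?_, fun s hs hsd ↦ ?_⟩
  · have h1 : 1 ∈ Icc 1 d := by grind
    exact le_antisymm (h 1 h1 (hpos' 1 h1 (by grind)) s (by grind))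
      (h s (by grind) (hpos' s (by grind) (by grind)) 1 h1)
  · rcases hs.eq_or_lt with rfl | hlt
    · exact h _ hdj hxdj _ (by grind)
    · rw [hzero (s + 1) (by grind) (hzero' _ (by grind) (by omega)),
        hzero s (by grind) (hzero' _ (by grind) hlt)]
      exact hV₀ (by grind) (by grind) (by omega)

variable {f : ℕ → ℝ → ℝ} {y : ℕ → ℝ}

theorem le_of_level_le (hf : ∀ s ∈ Icc 1 d, StrictAntiOn (f s) (Set.Icc 0 1))
    (hx : ∀ s ∈ Icc 1 d, x s ∈ Set.Icc 0 1) (hy : ∀ s ∈ Icc 1 d, y s ∈ Set.Icc 0 1)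
    (hxmax : IsMaxOnSupport d x fun s ↦ f s (x s)) (hymax : IsMaxOnSupport d y fun s ↦ f s (y s))
    {s₀ r₀ : ℕ} (hs₀ : s₀ ∈ Icc 1 d) (hxs₀ : 0 < x s₀) (hr₀ : r₀ ∈ Icc 1 d)
    (hlevel : f s₀ (x s₀) ≤ f r₀ (y r₀)) {s : ℕ} (hs : s ∈ Icc 1 d) : y s ≤ x s := by
  by_contra! hlt
  exact (calc f s (x s) ≤ f s₀ (x s₀) := hxmax s₀ hs₀ hxs₀ s hs
    _ ≤ f r₀ (y r₀) := hlevel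
    _ ≤ f s (y s) := hymax s hs ((hx s hs).1.trans_lt hlt) r₀ hr₀
    _ < f s (x s) := hf s hs (hx s hs) (hy s hs) hlt).false

theorem eqOn (hf : ∀ s ∈ Icc 1 d, StrictAntiOn (f s) (Set.Icc 0 1))
    (hx : ∀ s ∈ Icc 1 d, 0 ≤ x s) (hxsum : ∑ s ∈ Icc 1 d, x s = 1)
    (hy : ∀ s ∈ Icc 1 d, 0 ≤ y s) (hysum : ∑ s ∈ Icc 1 d, y s = 1)
    (hxmax : IsMaxOnSupport d x fun s ↦ f s (x s)) (hymax : IsMaxOnSupport d y fun s ↦ f s (y s))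
    {s : ℕ} (hs : s ∈ Icc 1 d) : x s = y s := by
  have hx' : ∀ s ∈ Icc 1 d, x s ∈ Set.Icc 0 1 := fun s hs ↦
    ⟨hx s hs, hxsum ▸ single_le_sum hx hs⟩
  have hy' : ∀ s ∈ Icc 1 d, y s ∈ Set.Icc 0 1 := fun s hs ↦
    ⟨hy s hs, hysum ▸ single_le_sum hy hs⟩
  obtain ⟨s₀, hs₀, hxs₀⟩ := exists_pos_of_sum_eq_one hxsum
  obtain ⟨r₀, hr₀, hyr₀⟩ := exists_pos_of_sum_eq_one hysum
  rcases le_total (f s₀ (x s₀)) (f r₀ (y r₀)) with hlevel | hlevel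
  · have hle : ∀ s ∈ Icc 1 d, y s ≤ x s := fun s hs ↦
      le_of_level_le hf hx' hy' hxmax hymax hs₀ hxs₀ hr₀ hlevel hs
    exact ((sum_eq_sum_iff_of_le hle).1 (hysum.trans hxsum.symm) s hs).symm
  · have hle : ∀ s ∈ Icc 1 d, x s ≤ y s := fun s hs ↦
      le_of_level_le hf hy' hx' hymax hxmax hr₀ hyr₀ hs₀ hlevel hs
    exact (sum_eq_sum_iff_of_le hle).1 (hxsum.trans hysum.symm) s hs

end IsMaxOnSupport

lemma HasDerivAt.nonpos_of_isMaxOn_Icc {g : ℝ → ℝ} {g' a b : ℝ} (hab : a < b)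
    (hg : HasDerivAt g g' a) (hmax : IsMaxOn g (Set.Icc a b) a) : g' ≤ 0 := by
  have hcone : b - a ∈ posTangentConeAt (Set.Icc a b) a :=
    sub_mem_posTangentConeAt_of_segment_subset (segment_eq_Icc hab.le).subset
  have := hmax.localize.hasFDerivWithinAt_nonpos hg.hasDerivWithinAt.hasFDerivWithinAt hcone
  simp only [ContinuousLinearMap.toSpanSingleton_apply, smul_eq_mul] at this
  exact nonpos_of_mul_nonpos_right this (sub_pos.2 hab)

section Potential

variable {d : ℕ} {f : ℕ → ℝ → ℝ}

noncomputable def potential (d : ℕ) (f : ℕ → ℝ → ℝ) (x : ℕ → ℝ) : ℝ :=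
  ∑ s ∈ Icc 1 d, ∫ u in (0 : ℝ)..x s, f s u

-- Every coordinate, not only those in `Icc 1 d`, is confined to `[0, 1]`: this makes the set
-- compact in `ℕ → ℝ`.
def simplex (d : ℕ) : Set (ℕ → ℝ) :=
  Set.univ.pi (fun _ ↦ Set.Icc 0 1) ∩ {x | ∑ s ∈ Icc 1 d, x s = 1}

lemma isCompact_simplex (d : ℕ) : IsCompact (simplex d) :=
  (isCompact_univ_pi fun _ ↦ isCompact_Icc).inter_right
    (isClosed_eq (continuous_finsetSum _ fun s _ ↦ continuous_apply s) continuous_const)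

lemma single_mem_simplex (hd : 1 ≤ d) : Pi.single 1 1 ∈ simplex d := by
  refine ⟨fun s _ ↦ ?_, ?_⟩
  · rcases eq_or_ne s 1 with rfl | hs <;> simp [*]
  · simp [sum_pi_single', hd]

lemma continuous_potential (hf : ∀ s, Continuous (f s)) : Continuous (potential d f) :=
  continuous_finsetSum _ fun s _ ↦
    (intervalIntegral.continuous_primitive (fun a b ↦ (hf s).intervalIntegrable a b) 0).comp
      (continuous_apply s)

theorem IsMaxOn.isMaxOnSupport (hf : ∀ s, Continuous (f s)) {x : ℕ → ℝ} (hx : x ∈ simplex d)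
    (hmax : IsMaxOn (potential d f) (simplex d) x) : IsMaxOnSupport d x fun s ↦ f s (x s) := by
  intro s hs hxs r hr
  rcases eq_or_ne r s with rfl | hrs
  · exact le_rfl
  set v : ℕ → ℝ := Pi.single r 1 - Pi.single s 1
  have hderiv : HasDerivAt (fun ε : ℝ ↦ potential d f (x + ε • v)) (f r (x r) - f s (x s)) 0 := by
    have hterm : ∀ u ∈ Icc 1 d, HasDerivAt (fun ε : ℝ ↦ ∫ t in (0 : ℝ)..x u + ε * v u, f u t)
        (f u (x u) * v u) 0 := fun u _ ↦
      ((hf u).integral_hasStrictDerivAt 0 (x u)).hasDerivAt.comp_of_eq 0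
        ((hasDerivAt_mul_const (v u)).const_add (x u)) (by simp)
    refine (HasDerivAt.fun_sum hterm).congr_deriv ?_
    simp [v, mul_sub, sum_sub_distrib, Pi.single_apply, hr, hs]
  have hmem : ∀ ε ∈ Set.Icc 0 (x s), x + ε • v ∈ simplex d := by
    obtain ⟨hbox, hsum⟩ := hx
    have hbox' : ∀ u, x u ∈ Set.Icc 0 1 := fun u ↦ hbox u (Set.mem_univ u)
    have hpair : x r + x s ≤ 1 :=
      hsum ▸ add_le_sum (fun u _ ↦ (hbox' u).1) hr hs hrs
    rintro ε ⟨hε0, hεs⟩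
    refine ⟨fun u _ ↦ ?_, ?_⟩
    · have := hbox' u
      simp only [v, Pi.add_apply, Pi.smul_apply, Pi.sub_apply, Pi.single_apply, smul_eq_mul]
      split_ifs <;> grind
    · simpa [v, sum_add_distrib, ← mul_sum, sum_sub_distrib, hr, hs] using hsum
  refine sub_nonpos.1 (hderiv.nonpos_of_isMaxOn_Icc hxs fun ε hε ↦ ?_)
  simpa using hmax (hmem ε hε)

theorem exists_isMaxOnSupport (hd : 1 ≤ d) (hf : ∀ s, Continuous (f s)) :
    ∃ x : ℕ → ℝ, (∀ s ∈ Icc 1 d, 0 ≤ x s) ∧ ∑ s ∈ Icc 1 d, x s = 1 ∧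
      IsMaxOnSupport d x fun s ↦ f s (x s) := by
  obtain ⟨x, hx, hmax⟩ := (isCompact_simplex d).exists_isMaxOn ⟨_, single_mem_simplex hd⟩
    (continuous_potential hf).continuousOn
  exact ⟨x, fun s _ ↦ (hx.1 s (Set.mem_univ s)).1, hx.2, hmax.isMaxOnSupport hf hx⟩

end Potential

section Column

variable {l m d : ℕ} {M b : ℕ → ℝ} {q : ℝ}

lemma strictAntiOn_mul_W_affine (hm : 1 ≤ m) (hml : m ≤ l - 1) {a c : ℝ} (hc : 0 < c)
    (ha : 0 ≤ a) (haq : a + q ≤ 1) (hq : 0 < q) :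
    StrictAntiOn (fun x ↦ c * W l m (a + x * q)) (Set.Icc 0 1) := by
  rintro x ⟨hx0, hx1⟩ y ⟨hy0, hy1⟩ hxy
  refine mul_lt_mul_of_pos_left (W_strictAntiOn hm hml ?_ ?_ (by gcongr)) hc <;>
    constructor <;> nlinarith

theorem exists_column (hm : 1 ≤ m) (hml : m ≤ l - 1) (hd : 1 ≤ d) (hM : ∀ s ∈ Icc 1 d, 0 < M s)
    (hb : ∀ s ∈ Icc 1 d, 0 ≤ b s ∧ b s + q ≤ 1) (hq : 0 < q)
    (hV₀ : AntitoneOn (fun s ↦ M s * W l m (b s)) (Set.Icc 1 d)) :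
    ∃ x : ℕ → ℝ, (∀ s ∈ Icc 1 d, 0 ≤ x s) ∧ ∑ s ∈ Icc 1 d, x s = 1 ∧
      IsWaterFilling d x fun s ↦ M s * W l m (b s + x s * q) := by
  obtain ⟨x, hx, hsum, hmax⟩ := exists_isMaxOnSupport (f := fun s u ↦ M s * W l m (b s + u * q))
    hd fun s ↦ continuous_const.mul ((continuous_W l m).comp (by fun_prop))
  refine ⟨x, hx, hsum, hmax.isWaterFilling hx (exists_pos_of_sum_eq_one hsum) hV₀
    (fun s _ hxs ↦ by simp [hxs]) fun s hs hxs ↦ ?_⟩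
  simpa using strictAntiOn_mul_W_affine hm hml (hM s hs) (hb s hs).1 (hb s hs).2 hq
    ⟨le_rfl, zero_le_one⟩ ⟨hx s hs, hsum ▸ single_le_sum hx hs⟩ hxs

theorem eqOn_column (hm : 1 ≤ m) (hml : m ≤ l - 1) (hM : ∀ s ∈ Icc 1 d, 0 < M s)
    (hb : ∀ s ∈ Icc 1 d, 0 ≤ b s ∧ b s + q ≤ 1) (hq : 0 < q) {x y : ℕ → ℝ}
    (hx : ∀ s ∈ Icc 1 d, 0 ≤ x s) (hxsum : ∑ s ∈ Icc 1 d, x s = 1)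
    (hxwf : IsWaterFilling d x fun s ↦ M s * W l m (b s + x s * q))
    (hy : ∀ s ∈ Icc 1 d, 0 ≤ y s) (hysum : ∑ s ∈ Icc 1 d, y s = 1)
    (hywf : IsWaterFilling d y fun s ↦ M s * W l m (b s + y s * q)) {s : ℕ} (hs : s ∈ Icc 1 d) :
    x s = y s :=
  IsMaxOnSupport.eqOn (f := fun s u ↦ M s * W l m (b s + u * q))
    (fun s hs ↦ strictAntiOn_mul_W_affine hm hml (hM s hs) (hb s hs).1 (hb s hs).2 hq)
    hx hxsum hy hysum hxwf.isMaxOnSupport hywf.isMaxOnSupport hs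

end Column

section System

variable {l m d n : ℕ} {M q : ℕ → ℝ} {t t' : ℕ → ℕ → ℝ} {j : ℕ}

lemma gam_eq_add (hj : j ≤ n) (s : ℕ) : gam n q t s j = gam n q t s (j + 1) + t s j * q j := by
  rw [gam, gam, ← add_sum_Ioc_eq_sum_Icc hj, Icc_add_one_left_eq_Ioc, add_comm]

lemma gam_congr {s : ℕ} (h : ∀ k ∈ Icc j n, t s k = t' s k) : gam n q t s j = gam n q t' s j :=
  sum_congr rfl fun k hk ↦ by rw [h k hk]

def IsSolutionFrom (l m d n : ℕ) (M q : ℕ → ℝ) (j : ℕ) (t : ℕ → ℕ → ℝ) : Prop :=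
  (∀ s ∈ Icc 1 d, ∀ k ∈ Icc 1 n, 0 ≤ t s k) ∧
  ∀ k ∈ Icc j n, ∑ s ∈ Icc 1 d, t s k = 1 ∧
    IsWaterFilling d (fun s ↦ t s k) fun s ↦ M s * W l m (gam n q t s k)

lemma isSolution_iff_isSolutionFrom_one :
    IsSolution l m d n M q t ↔ IsSolutionFrom l m d n M q 1 t :=
  Iff.rfl

namespace IsSolutionFrom

lemma mono {k : ℕ} (h : IsSolutionFrom l m d n M q j t) (hjk : j ≤ k) :
    IsSolutionFrom l m d n M q k t :=
  ⟨h.1, fun i hi ↦ h.2 i (by grind)⟩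

lemma gam_bounds (h : IsSolutionFrom l m d n M q (j + 1) t) (hj : 1 ≤ j) (hjn : j ≤ n)
    (hq : ∀ k ∈ Icc 1 n, 0 < q k) (hqsum : ∑ k ∈ Icc 1 n, q k < 1) {s : ℕ} (hs : s ∈ Icc 1 d) :
    0 ≤ gam n q t s (j + 1) ∧ gam n q t s (j + 1) + q j ≤ 1 := by
  have ht : ∀ k ∈ Icc (j + 1) n, 0 ≤ t s k ∧ t s k ≤ 1 := fun k hk ↦
    ⟨h.1 s hs k (by grind),
      (h.2 k hk).1 ▸ single_le_sum (fun r hr ↦ h.1 r hr k (by grind)) hs⟩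
  have hq' : ∀ k ∈ Icc (j + 1) n, 0 < q k := fun k hk ↦ hq k (by grind)
  refine ⟨sum_nonneg fun k hk ↦ mul_nonneg (ht k hk).1 (hq' k hk).le, ?_⟩
  calc gam n q t s (j + 1) + q j ≤ ∑ k ∈ Icc (j + 1) n, q k + q j := by
        gcongr
        exact sum_le_sum fun k hk ↦ mul_le_of_le_one_left (hq' k hk).le (ht k hk).2
    _ = ∑ k ∈ Icc j n, q k := by
        rw [← add_sum_Ioc_eq_sum_Icc hjn, Icc_add_one_left_eq_Ioc, add_comm]
    _ ≤ ∑ k ∈ Icc 1 n, q k :=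
        sum_le_sum_of_subset_of_nonneg (Icc_subset_Icc_left hj) fun k hk _ ↦ (hq k hk).le
    _ ≤ 1 := hqsum.le

lemma antitoneOn (h : IsSolutionFrom l m d n M q (j + 1) t) (hm : 1 ≤ m) (hjn : j ≤ n)
    (hM : ∀ s ∈ Icc 1 d, ∀ r ∈ Icc 1 d, s ≤ r → M r ≤ M s) :
    AntitoneOn (fun s ↦ M s * W l m (gam n q t s (j + 1))) (Set.Icc 1 d) := by
  rcases hjn.lt_or_eq with hlt | rfl
  · exact (h.2 (j + 1) (by grind)).2.antitoneOn
  · simp only [gam, Icc_eq_empty_of_lt (Nat.lt_add_one j), sum_empty, W_zero hm, mul_one]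
    exact fun s hs r hr hsr ↦ hM s (mem_Icc.2 hs) r (mem_Icc.2 hr) hsr

lemma exists_of_succ (h : IsSolutionFrom l m d n M q (j + 1) t) (hm : 1 ≤ m) (hml : m ≤ l - 1)
    (hd : 1 ≤ d) (hM : ∀ s ∈ Icc 1 d, ∀ r ∈ Icc 1 d, s ≤ r → M r ≤ M s)
    (hMpos : ∀ s ∈ Icc 1 d, 0 < M s) (hq : ∀ k ∈ Icc 1 n, 0 < q k)
    (hqsum : ∑ k ∈ Icc 1 n, q k < 1) (hj : 1 ≤ j) (hjn : j ≤ n) :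
    ∃ t', IsSolutionFrom l m d n M q j t' := by
  obtain ⟨c, hc0, hcsum, hcwf⟩ := exists_column hm hml hd hMpos
    (fun s hs ↦ h.gam_bounds hj hjn hq hqsum hs) (hq j (by grind)) (h.antitoneOn hm hjn hM)
  set t' : ℕ → ℕ → ℝ := fun s k ↦ if k = j then c s else t s k
  have hlater : ∀ k, j < k → ∀ s, gam n q t' s k = gam n q t s k := fun k hk s ↦
    gam_congr fun i hi ↦ if_neg (by grind)
  refine ⟨t', fun s hs k hk ↦ ?_, fun k hk ↦ ?_⟩
  · by_cases hkj : k = j <;> simp [t', hkj, hc0 s hs, h.1 s hs k hk]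
  · rcases (mem_Icc.1 hk).1.eq_or_lt with rfl | hlt
    · simp only [gam_eq_add hjn, hlater (j + 1) (Nat.lt_add_one j)]
      simpa [t'] using ⟨hcsum, hcwf⟩
    · simp only [hlater k hlt]
      simp only [t', if_neg hlt.ne']
      exact h.2 k (by grind)

lemma eqOn_of_succ (ht : IsSolutionFrom l m d n M q j t) (ht' : IsSolutionFrom l m d n M q j t')
    (hm : 1 ≤ m) (hml : m ≤ l - 1) (hMpos : ∀ s ∈ Icc 1 d, 0 < M s)
    (hq : ∀ k ∈ Icc 1 n, 0 < q k) (hqsum : ∑ k ∈ Icc 1 n, q k < 1) (hj : 1 ≤ j) (hjn : j ≤ n)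
    (hlater : ∀ k ∈ Icc (j + 1) n, ∀ s ∈ Icc 1 d, t s k = t' s k) {s : ℕ} (hs : s ∈ Icc 1 d) :
    t s j = t' s j := by
  have hgam : ∀ s ∈ Icc 1 d, gam n q t' s (j + 1) = gam n q t s (j + 1) := fun s hs ↦
    gam_congr fun k hk ↦ (hlater k hk s hs).symm
  obtain ⟨hsum, hwf⟩ := ht.2 j (by grind)
  obtain ⟨hsum', hwf'⟩ := ht'.2 j (by grind)
  simp only [gam_eq_add hjn] at hwf hwf'
  exact eqOn_column hm hml hMpos
    (fun s hs ↦ (ht.mono (Nat.le_add_right j 1)).gam_bounds hj hjn hq hqsum hs) (hq j (by grind))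
    (fun s hs ↦ ht.1 s hs j (by grind)) hsum hwf (fun s hs ↦ ht'.1 s hs j (by grind)) hsum'
    (hwf'.congr fun s hs ↦ by rw [hgam s hs]) hs

end IsSolutionFrom

theorem exists_isSolutionFrom (hm : 1 ≤ m) (hml : m ≤ l - 1) (hd : 1 ≤ d)
    (hM : ∀ s ∈ Icc 1 d, ∀ r ∈ Icc 1 d, s ≤ r → M r ≤ M s) (hMpos : ∀ s ∈ Icc 1 d, 0 < M s)
    (hq : ∀ k ∈ Icc 1 n, 0 < q k) (hqsum : ∑ k ∈ Icc 1 n, q k < 1) (hj : 1 ≤ j)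
    (hjn : j ≤ n + 1) : ∃ t, IsSolutionFrom l m d n M q j t := by
  induction hjn using Nat.decreasingInduction with
  | self => exact ⟨0, fun _ _ _ _ ↦ le_rfl, fun k hk ↦ by grind⟩
  | of_succ j hjn ih =>
    obtain ⟨t, ht⟩ := ih (by omega)
    exact ht.exists_of_succ hm hml hd hM hMpos hq hqsum hj (by omega)

theorem IsSolution.eqOn (ht : IsSolution l m d n M q t)
    (ht' : IsSolution l m d n M q t') (hm : 1 ≤ m) (hml : m ≤ l - 1)
    (hMpos : ∀ s ∈ Icc 1 d, 0 < M s) (hq : ∀ k ∈ Icc 1 n, 0 < q k)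
    (hqsum : ∑ k ∈ Icc 1 n, q k < 1) (hj : 1 ≤ j) (hjn : j ≤ n + 1) :
    ∀ k ∈ Icc j n, ∀ s ∈ Icc 1 d, t s k = t' s k := by
  induction hjn using Nat.decreasingInduction with
  | self => grind
  | of_succ j hjn ih =>
    intro k hk s hs
    rcases (mem_Icc.1 hk).1.eq_or_lt with rfl | hlt
    · exact ((isSolution_iff_isSolutionFrom_one.1 ht).mono hj).eqOn_of_succ
        ((isSolution_iff_isSolutionFrom_one.1 ht').mono hj) hm hml hMpos hq hqsum hj (by omega)
        (ih (by omega)) hs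
    · exact ih (by omega) k (by grind) s hs

end System

theorem stmt1_general (l m d n : ℕ) (hm : 1 ≤ m) (hml : m ≤ l - 1) (hd : 2 ≤ d)
    (M q : ℕ → ℝ)
    (hM : ∀ s ∈ Finset.Icc 1 d, ∀ r ∈ Finset.Icc 1 d, s ≤ r → M r ≤ M s)
    (hMpos : ∀ s ∈ Finset.Icc 1 d, 0 < M s)
    (hq : ∀ j ∈ Finset.Icc 1 n, 0 < q j)
    (hqsum : ∑ j ∈ Finset.Icc 1 n, q j < 1) :
    (∃ t : ℕ → ℕ → ℝ, IsSolution l m d n M q t) ∧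
    (∀ t t' : ℕ → ℕ → ℝ, IsSolution l m d n M q t → IsSolution l m d n M q t' →
      ∀ s ∈ Finset.Icc 1 d, ∀ j ∈ Finset.Icc 1 n, t s j = t' s j) :=
  ⟨(exists_isSolutionFrom hm hml (by omega) hM hMpos hq hqsum le_rfl (by omega)).imp
      fun _ ↦ isSolution_iff_isSolutionFrom_one.2,
    fun t t' ht ht' s hs j hj ↦ ht.eqOn ht' hm hml hMpos hq hqsum le_rfl (by omega) j hj s hs⟩

theorem stmt1 (l m d n : ℕ) (hm : 1 ≤ m) (hml : m ≤ l - 1) (hd : 2 ≤ d) (hn : 1 ≤ n)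
    (M q : ℕ → ℝ)
    (hM : ∀ s ∈ Finset.Icc 1 d, ∀ r ∈ Finset.Icc 1 d, s ≤ r → M r ≤ M s)
    (hMpos : ∀ s ∈ Finset.Icc 1 d, 0 < M s)
    (hq : ∀ j ∈ Finset.Icc 1 n, 0 < q j)
    (hqsum : ∑ j ∈ Finset.Icc 1 n, q j < 1) :
    (∃ t : ℕ → ℕ → ℝ, IsSolution l m d n M q t) ∧
    (∀ t t' : ℕ → ℕ → ℝ, IsSolution l m d n M q t → IsSolution l m d n M q t' →
      ∀ s ∈ Finset.Icc 1 d, ∀ j ∈ Finset.Icc 1 n, t s j = t' s j) :=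
  stmt1_general l m d n hm hml hd M q hM hMpos hq hqsum
end

section
/- Let G be a finite simple graph that is mean valid with respect to two ordered partitions I_1, …, I_d and Ī_1, …, Ī_{d̄} of its vertex set (each being a partition into pairwise disjoint maximal independent sets, ordered by nonincreasing cardinality, and each satisfying the mean-validity inequality). Then for all j ∈ {1,…,d} and k ∈ {1,…,d̄}: if |I_j| ≠ |Ī_k|, then I_j ∩ Ī_k = ∅. -/
/-- `S` is an independent set of the simple graph `G`. -/
def IsIndepF {V : Type*} (G : SimpleGraph V) (S : Finset V) : Prop :=
  ∀ a ∈ S, ∀ b ∈ S, ¬ G.Adj a b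

/-- `S` is a maximal independent set of `G`. -/
def IsMaxIndepF {V : Type*} [DecidableEq V] (G : SimpleGraph V) (S : Finset V) : Prop :=
  IsIndepF G S ∧ ∀ v, v ∉ S → ¬ IsIndepF G (insert v S)

/-- `I 1, …, I d` is an ordered partition of the vertex set of `G` into pairwise disjoint
maximal independent sets, of nonincreasing cardinality, witnessing that `G` is mean valid. -/
def MeanValidPartition {V : Type*} [Fintype V] [DecidableEq V] (G : SimpleGraph V)
    (d : ℕ) (I : ℕ → Finset V) : Prop :=
  2 ≤ d ∧
  (∀ s ∈ Finset.Icc 1 d, ∀ r ∈ Finset.Icc 1 d, s ≠ r → Disjoint (I s) (I r)) ∧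
  ((Finset.Icc 1 d).biUnion I = Finset.univ) ∧
  (∀ s ∈ Finset.Icc 1 d, IsMaxIndepF G (I s)) ∧
  (∀ s ∈ Finset.Icc 1 d, ∀ r ∈ Finset.Icc 1 d, s ≤ r → (I r).card ≤ (I s).card) ∧
  (∀ J : Finset V, IsIndepF G J →
    ∑ s ∈ Finset.Icc 1 d, ((J ∩ I s).card : ℝ) / ((I s).card : ℝ) ≤ 1)

/-! Put `a j k = |I_j ∩ Ī_k|`, so the row sums of `a` are `c j = |I_j|` and its
column sums are `b k = |Ī_k|`. Mean validity of each partition, tested on the blocks of the other,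
gives `∑ k, a j k / b k ≤ 1` and `∑ j, a j k / c j ≤ 1`. Hence
`∑ j k, a j k * (c j / b k + b k / c j - 2) ≤ ∑ c + ∑ b - 2 |V| = 0`,
while each summand equals `a j k * (c j - b k)² / (b k * c j) ≥ 0`. So every summand vanishes,
and `a j k ≠ 0` forces `c j = b k`. -/

open Finset

lemma mul_sq_sub_div_mul_eq {a b c : ℝ} (ha : 0 ≤ a) (hab : a ≤ b) (hac : a ≤ c) :
    a * (c - b) ^ 2 / (b * c) = a * (c / b) + a * (b / c) - 2 * a := by
  rcases ha.eq_or_lt with rfl | ha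
  · simp
  have hb : b ≠ 0 := (ha.trans_le hab).ne'
  have hc : c ≠ 0 := (ha.trans_le hac).ne'
  field_simp
  ring

section Margins

variable {ι κ : Type*} {S : Finset ι} {T : Finset κ} {a : ι → κ → ℝ} {c : ι → ℝ} {b : κ → ℝ}

lemma sum_sum_mul_div_le (hc : ∀ j ∈ S, 0 ≤ c j) (hcb : ∀ j ∈ S, ∑ k ∈ T, a j k / b k ≤ 1) :
    ∑ j ∈ S, ∑ k ∈ T, a j k * (c j / b k) ≤ ∑ j ∈ S, c j := by
  refine sum_le_sum fun j hj => ?_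
  calc ∑ k ∈ T, a j k * (c j / b k) = c j * ∑ k ∈ T, a j k / b k := by
        rw [mul_sum]
        exact sum_congr rfl fun k _ => by ring
    _ ≤ c j * 1 := mul_le_mul_of_nonneg_left (hcb j hj) (hc j hj)
    _ = c j := mul_one _

lemma le_of_sum_eq_of_nonneg (ha : ∀ j ∈ S, ∀ k ∈ T, 0 ≤ a j k)
    (hc : ∀ j ∈ S, ∑ k ∈ T, a j k = c j) {j : ι} (hj : j ∈ S) {k : κ} (hk : k ∈ T) :
    a j k ≤ c j :=
  hc j hj ▸ single_le_sum (ha j hj) hk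

lemma sum_sum_mul_sq_sub_div_mul_nonpos (ha : ∀ j ∈ S, ∀ k ∈ T, 0 ≤ a j k)
    (hc : ∀ j ∈ S, ∑ k ∈ T, a j k = c j) (hb : ∀ k ∈ T, ∑ j ∈ S, a j k = b k)
    (hcb : ∀ j ∈ S, ∑ k ∈ T, a j k / b k ≤ 1) (hbc : ∀ k ∈ T, ∑ j ∈ S, a j k / c j ≤ 1) :
    ∑ j ∈ S, ∑ k ∈ T, a j k * (c j - b k) ^ 2 / (b k * c j) ≤ 0 := by
  have haT : ∀ k ∈ T, ∀ j ∈ S, 0 ≤ a j k := fun k hk j hj => ha j hj k hk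
  have hsum_b : ∑ k ∈ T, b k = ∑ j ∈ S, c j := by
    rw [← sum_congr rfl hb, sum_comm, sum_congr rfl hc]
  calc ∑ j ∈ S, ∑ k ∈ T, a j k * (c j - b k) ^ 2 / (b k * c j)
      = ∑ j ∈ S, ∑ k ∈ T, a j k * (c j / b k) + ∑ k ∈ T, ∑ j ∈ S, a j k * (b k / c j)
          - 2 * ∑ j ∈ S, ∑ k ∈ T, a j k := by
        rw [sum_comm (f := fun k j => a j k * (b k / c j)), mul_sum, ← sum_add_distrib,
          ← sum_sub_distrib]
        refine sum_congr rfl fun j hj => ?_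
        rw [mul_sum, ← sum_add_distrib, ← sum_sub_distrib]
        exact sum_congr rfl fun k hk => mul_sq_sub_div_mul_eq (ha j hj k hk)
          (le_of_sum_eq_of_nonneg haT hb hk hj) (le_of_sum_eq_of_nonneg ha hc hj hk)
    _ ≤ ∑ j ∈ S, c j + ∑ k ∈ T, b k - 2 * ∑ j ∈ S, c j := by
        rw [sum_congr rfl hc]
        exact sub_le_sub_right (add_le_add
          (sum_sum_mul_div_le (fun j hj => hc j hj ▸ sum_nonneg (ha j hj)) hcb)
          (sum_sum_mul_div_le (fun k hk => hb k hk ▸ sum_nonneg (haT k hk)) hbc)) _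
    _ = 0 := by rw [hsum_b]; ring

theorem eq_of_ne_zero_of_sum_div_margin_le_one (ha : ∀ j ∈ S, ∀ k ∈ T, 0 ≤ a j k)
    (hc : ∀ j ∈ S, ∑ k ∈ T, a j k = c j) (hb : ∀ k ∈ T, ∑ j ∈ S, a j k = b k)
    (hcb : ∀ j ∈ S, ∑ k ∈ T, a j k / b k ≤ 1) (hbc : ∀ k ∈ T, ∑ j ∈ S, a j k / c j ≤ 1)
    {j : ι} (hj : j ∈ S) {k : κ} (hk : k ∈ T) (hjk : a j k ≠ 0) : c j = b k := by
  have haT : ∀ k ∈ T, ∀ j ∈ S, 0 ≤ a j k := fun k hk j hj => ha j hj k hk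
  have hterm_nonneg : ∀ j ∈ S, ∀ k ∈ T, 0 ≤ a j k * (c j - b k) ^ 2 / (b k * c j) :=
    fun j hj k hk => div_nonneg (mul_nonneg (ha j hj k hk) (sq_nonneg _))
      (mul_nonneg ((ha j hj k hk).trans (le_of_sum_eq_of_nonneg haT hb hk hj))
        ((ha j hj k hk).trans (le_of_sum_eq_of_nonneg ha hc hj hk)))
  have hterm_zero : a j k * (c j - b k) ^ 2 / (b k * c j) = 0 := by
    have hrow := (sum_eq_zero_iff_of_nonneg fun j hj => sum_nonneg (hterm_nonneg j hj)).mp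
      ((sum_sum_mul_sq_sub_div_mul_nonpos ha hc hb hcb hbc).antisymm
        (sum_nonneg fun j hj => sum_nonneg (hterm_nonneg j hj))) j hj
    exact (sum_eq_zero_iff_of_nonneg (hterm_nonneg j hj)).mp hrow k hk
  have hpos : 0 < a j k := (ha j hj k hk).lt_of_ne' hjk
  have hbc_ne : b k * c j ≠ 0 :=
    mul_ne_zero (hpos.trans_le (le_of_sum_eq_of_nonneg haT hb hk hj)).ne'
      (hpos.trans_le (le_of_sum_eq_of_nonneg ha hc hj hk)).ne'
  simpa [hjk, hbc_ne, sub_eq_zero] using hterm_zero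

end Margins

lemma MeanValidPartition.sum_card_inter {V : Type*} [Fintype V] [DecidableEq V]
    {G : SimpleGraph V} {d : ℕ} {I : ℕ → Finset V} (hI : MeanValidPartition G d I)
    (J : Finset V) : ∑ s ∈ Icc 1 d, (J ∩ I s).card = J.card := by
  obtain ⟨-, hdisj, hcov, -⟩ := hI
  rw [← card_biUnion, ← inter_biUnion, hcov, inter_univ]
  exact fun s hs r hr hsr =>
    (hdisj s hs r hr hsr).mono inter_subset_right inter_subset_right

theorem stmt5 {V : Type*} [Fintype V] [DecidableEq V] (G : SimpleGraph V)
    (d dbar : ℕ) (I Ibar : ℕ → Finset V)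
    (hI : MeanValidPartition G d I) (hIbar : MeanValidPartition G dbar Ibar) :
    ∀ j ∈ Finset.Icc 1 d, ∀ k ∈ Finset.Icc 1 dbar,
      (I j).card ≠ (Ibar k).card → I j ∩ Ibar k = ∅ := by
  intro j hj k hk hne
  have hrow := hIbar.sum_card_inter
  have hcol := hI.sum_card_inter
  obtain ⟨-, -, -, hmax, -, hmean⟩ := hI
  obtain ⟨-, -, -, hmaxbar, -, hmeanbar⟩ := hIbar
  rw [← card_eq_zero]
  by_contra hjk
  refine hne (Nat.cast_injective (R := ℝ)
    (eq_of_ne_zero_of_sum_div_margin_le_one (a := fun s t => ((I s ∩ Ibar t).card : ℝ))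
      (c := fun s => ((I s).card : ℝ)) (b := fun t => ((Ibar t).card : ℝ))
      (fun _ _ _ _ => Nat.cast_nonneg _) (fun s _ => ?_) (fun t _ => ?_) (fun s hs => ?_)
      (fun t ht => ?_) hj hk (Nat.cast_ne_zero.mpr hjk)))
  · exact_mod_cast hrow (I s)
  · simp_rw [inter_comm (I _)]
    exact_mod_cast hcol (Ibar t)
  · exact hmeanbar (I s) (hmax s hs).1
  · simp_rw [inter_comm (I _)]
    exact hmean (Ibar t) (hmaxbar t ht).1
end

section
/- Let G be a finite vertex-transitive simple graph satisfying the uniform clique-extension property, and let S, T be subsets of the vertex set of G such that G[S] and G[T] are isomorphic. Then for every integer j ≥ 0, the number of maximal cliques C of G with |C ∩ S| = j equals the number of maximal cliques C of G with |C ∩ T| = j. -/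
/-- `C` is a clique of the simple graph `G`. -/
def IsCliqueF {V : Type*} (G : SimpleGraph V) (C : Finset V) : Prop :=
  ∀ a ∈ C, ∀ b ∈ C, a ≠ b → G.Adj a b

/-- `C` is a maximal clique of `G`. -/
def IsMaxCliqueF {V : Type*} [DecidableEq V] (G : SimpleGraph V) (C : Finset V) : Prop :=
  IsCliqueF G C ∧ ∀ v, v ∉ C → ¬ IsCliqueF G (insert v C)

/-- `G` satisfies the uniform clique-extension property: for every `j ≥ 1` there is an
integer `r_j` such that every clique with exactly `j` vertices is contained in exactly
`r_j` maximal cliques. -/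
def UniformCliqueExtension {V : Type*} [Fintype V] [DecidableEq V] (G : SimpleGraph V) : Prop :=
  ∀ j : ℕ, 1 ≤ j → ∃ r : ℕ, ∀ C : Finset V, IsCliqueF G C → C.card = j →
    {D : Finset V | IsMaxCliqueF G D ∧ C ⊆ D}.ncard = r


open Finset
open scoped Classical

lemma binom_inversion (N : ℕ) (f g : ℕ → ℕ)
    (hf : ∀ j, N < j → f j = 0) (hg : ∀ j, N < j → g j = 0)
    (hm : ∀ i, ∑ j ∈ range (N+1), j.choose i * f j = ∑ j ∈ range (N+1), j.choose i * g j) :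
    ∀ j, f j = g j := by
  suffices h : ∀ k i, N < i + k → f i = g i by
    intro j; exact h (N+1) j (by omega)
  intro k
  induction k with
  | zero => intro i hi; rw [hf i (by omega), hg i (by omega)]
  | succ k ih =>
    intro i hi
    by_cases hik : N < i + k
    · exact ih i hik
    · have hiN : i ≤ N := by omega
      have hgt : ∀ j, i < j → f j = g j := by
        intro j hj
        by_cases hjN : N < j
        · rw [hf j hjN, hg j hjN]
        · exact ih j (by omega)
      have key : ∀ h : ℕ → ℕ, ∑ j ∈ range (N+1), j.choose i * h j
          = h i + ∑ j ∈ (range (N+1)).filter (fun j => i < j), j.choose i * h j := by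
        intro h
        rw [← Finset.sum_filter_add_sum_filter_not (range (N+1)) (fun j => i < j)]
        rw [add_comm]
        congr 1
        rw [Finset.sum_eq_single i]
        · simp
        · intro b hb hbne
          simp only [mem_filter, mem_range, not_lt] at hb
          have : b < i := lt_of_le_of_ne hb.2 hbne
          rw [Nat.choose_eq_zero_of_lt this, zero_mul]
        · intro habs
          exfalso; apply habs
          simp only [mem_filter, mem_range, not_lt]
          exact ⟨by omega, le_refl i⟩
      have hmi := hm i
      rw [key f, key g] at hmi
      have hsum : ∑ j ∈ (range (N+1)).filter (fun j => i < j), j.choose i * f j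
          = ∑ j ∈ (range (N+1)).filter (fun j => i < j), j.choose i * g j := by
        apply Finset.sum_congr rfl
        intro j hj
        simp only [mem_filter] at hj
        rw [hgt j hj.2]
      omega


lemma clique_subset {V : Type*} {G : SimpleGraph V} {C K : Finset V}
    (hC : IsCliqueF G C) (hK : K ⊆ C) : IsCliqueF G K :=
  fun a ha b hb hab => hC a (hK ha) b (hK hb) hab

lemma double_count {V : Type*} [Fintype V] [DecidableEq V] (G : SimpleGraph V)
    (S : Finset V) (i r : ℕ)
    (hr : ∀ C : Finset V, IsCliqueF G C → C.card = i →
      {D : Finset V | IsMaxCliqueF G D ∧ C ⊆ D}.ncard = r) :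
    ∑ C ∈ univ.filter (fun C => IsMaxCliqueF G C), (C ∩ S).card.choose i
      = ((S.powerset.filter (fun K => IsCliqueF G K ∧ K.card = i)).card) * r := by
  set M := univ.filter (fun C : Finset V => IsMaxCliqueF G C) with hM
  have step1 : ∀ C ∈ M, (C ∩ S).card.choose i
      = ((S.powersetCard i).filter (fun K => K ⊆ C)).card := by
    intro C _
    rw [← Finset.card_powersetCard]
    congr 1
    ext K
    simp only [mem_powersetCard, mem_filter, Finset.subset_inter_iff]
    tauto
  rw [Finset.sum_congr rfl step1]
  have step2 : ∀ C ∈ M, ((S.powersetCard i).filter (fun K => K ⊆ C)).card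
      = ∑ K ∈ S.powersetCard i, if K ⊆ C then 1 else 0 := by
    intro C _
    rw [Finset.card_filter]
  rw [Finset.sum_congr rfl step2, Finset.sum_comm]
  have step3 : ∀ K ∈ S.powersetCard i, (∑ C ∈ M, if K ⊆ C then 1 else 0)
      = (M.filter (fun C => K ⊆ C)).card := by
    intro K _
    rw [Finset.card_filter]
  rw [Finset.sum_congr rfl step3]
  -- split into cliques and non-cliques
  rw [← Finset.sum_filter_add_sum_filter_not (S.powersetCard i) (fun K => IsCliqueF G K)]
  have hzero : ∑ K ∈ (S.powersetCard i).filter (fun K => ¬ IsCliqueF G K),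
      (M.filter (fun C => K ⊆ C)).card = 0 := by
    apply Finset.sum_eq_zero
    intro K hK
    simp only [mem_filter] at hK
    rw [Finset.card_eq_zero, Finset.filter_eq_empty_iff]
    intro C hC hKC
    exact hK.2 (clique_subset (Finset.mem_filter.mp hC).2.1 hKC)
  rw [hzero, add_zero]
  have hval : ∀ K ∈ (S.powersetCard i).filter (fun K => IsCliqueF G K),
      (M.filter (fun C => K ⊆ C)).card = r := by
    intro K hK
    simp only [mem_filter, mem_powersetCard] at hK
    have := hr K hK.2 hK.1.2
    rw [← this]
    have : {D : Finset V | IsMaxCliqueF G D ∧ K ⊆ D} = ↑(M.filter (fun C => K ⊆ C)) := by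
      ext D
      simp [hM, Finset.mem_filter]
    rw [this, Set.ncard_coe_finset]
  rw [Finset.sum_congr rfl hval, Finset.sum_const, smul_eq_mul]
  congr 1
  -- card of filtered powersetCard = card of powerset filter with card condition
  congr 1
  ext K
  simp only [mem_filter, mem_powersetCard, mem_powerset]
  tauto


lemma clique_transport {V : Type*} [Fintype V] [DecidableEq V] (G : SimpleGraph V)
    (S T : Finset V) (e : G.induce (↑S : Set V) ≃g G.induce (↑T : Set V)) (i : ℕ) :
    (S.powerset.filter (fun K => IsCliqueF G K ∧ K.card = i)).card
      = (T.powerset.filter (fun K => IsCliqueF G K ∧ K.card = i)).card := by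
  have main : ∀ (A B : Finset V) (f : G.induce (↑A : Set V) ≃g G.induce (↑B : Set V))
      (K : Finset V), K ∈ A.powerset.filter (fun K => IsCliqueF G K ∧ K.card = i) →
      (K.image (fun x => if h : x ∈ (A : Set V) then (f ⟨x, h⟩ : V) else x))
        ∈ B.powerset.filter (fun K => IsCliqueF G K ∧ K.card = i) := by
    intro A B f K hK
    simp only [mem_filter, mem_powerset] at hK ⊢
    obtain ⟨hKA, hKcl, hKcard⟩ := hK
    have hmemA : ∀ x ∈ K, x ∈ (A : Set V) := fun x hx => by
      simpa using hKA hx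
    constructor
    · intro y hy
      simp only [mem_image] at hy
      obtain ⟨x, hx, rfl⟩ := hy
      rw [dif_pos (hmemA x hx)]
      exact (f ⟨x, hmemA x hx⟩).2
    constructor
    · intro a ha b hb hab
      simp only [mem_image] at ha hb
      obtain ⟨x, hx, rfl⟩ := ha
      obtain ⟨y, hy, rfl⟩ := hb
      rw [dif_pos (hmemA x hx)] at hab ⊢
      rw [dif_pos (hmemA y hy)] at hab ⊢
      have hxy : x ≠ y := by
        rintro rfl; exact hab rfl
      have hadj : (G.induce (↑A : Set V)).Adj ⟨x, hmemA x hx⟩ ⟨y, hmemA y hy⟩ := by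
        simp only [SimpleGraph.comap_adj, Function.Embedding.coe_subtype]
        exact hKcl x hx y hy hxy
      have := f.map_adj_iff.mpr hadj
      simpa using this
    · rw [Finset.card_image_of_injOn, hKcard]
      intro x hx y hy hxy
      simp only [dif_pos (hmemA x hx), dif_pos (hmemA y hy)] at hxy
      have : f ⟨x, hmemA x hx⟩ = f ⟨y, hmemA y hy⟩ := Subtype.ext hxy
      have := f.injective this
      simpa using this
  apply Finset.card_bij
    (fun K _ => K.image (fun x => if h : x ∈ (S : Set V) then (e ⟨x, h⟩ : V) else x))
  · exact main S T e
  · -- injectivity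
    intro K1 h1 K2 h2 heq
    simp only [mem_filter, mem_powerset] at h1 h2
    have inv1 : ∀ K : Finset V, K ⊆ S →
        (K.image (fun x => if h : x ∈ (S : Set V) then (e ⟨x, h⟩ : V) else x)).image
          (fun x => if h : x ∈ (T : Set V) then (e.symm ⟨x, h⟩ : V) else x) = K := by
      intro K hKS
      rw [Finset.image_image]
      have : ∀ x ∈ K, ((fun x => if h : x ∈ (T : Set V) then (e.symm ⟨x, h⟩ : V) else x) ∘
          (fun x => if h : x ∈ (S : Set V) then (e ⟨x, h⟩ : V) else x)) x = x := by
        intro x hx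
        have hxS : x ∈ (S : Set V) := by simpa using hKS hx
        simp only [Function.comp_apply, dif_pos hxS, dif_pos (e ⟨x, hxS⟩).2,
          Subtype.coe_eta, e.symm_apply_apply]
      rw [Finset.image_congr (fun x hx => this x hx), Finset.image_id']
    have := congrArg (Finset.image
        (fun x => if h : x ∈ (T : Set V) then (e.symm ⟨x, h⟩ : V) else x)) heq
    rwa [inv1 K1 h1.1, inv1 K2 h2.1] at this
  · -- surjectivity
    intro L hL
    refine ⟨L.image (fun x => if h : x ∈ (T : Set V) then (e.symm ⟨x, h⟩ : V) else x),
      main T S e.symm L hL, ?_⟩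
    simp only [mem_filter, mem_powerset] at hL
    rw [Finset.image_image]
    have : ∀ x ∈ L, ((fun x => if h : x ∈ (S : Set V) then (e ⟨x, h⟩ : V) else x) ∘
        (fun x => if h : x ∈ (T : Set V) then (e.symm ⟨x, h⟩ : V) else x)) x = x := by
      intro x hx
      have hxT : x ∈ (T : Set V) := by simpa using hL.1 hx
      simp only [Function.comp_apply, dif_pos hxT, dif_pos (e.symm ⟨x, hxT⟩).2,
        Subtype.coe_eta, e.apply_symm_apply]
    rw [Finset.image_congr (fun x hx => this x hx), Finset.image_id']


theorem stmt9 {V : Type*} [Fintype V] [DecidableEq V] (G : SimpleGraph V)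
    (htrans : ∀ a b : V, ∃ F : G ≃g G, F a = b)
    (hext : UniformCliqueExtension G)
    (S T : Finset V)
    (hiso : Nonempty (G.induce (↑S : Set V) ≃g G.induce (↑T : Set V)))
    (j : ℕ) :
    {C : Finset V | IsMaxCliqueF G C ∧ (C ∩ S).card = j}.ncard =
      {C : Finset V | IsMaxCliqueF G C ∧ (C ∩ T).card = j}.ncard := by
  classical
  obtain ⟨e⟩ := hiso
  set N := Fintype.card V with hN
  set M := univ.filter (fun C : Finset V => IsMaxCliqueF G C) with hM
  set f := fun j => (M.filter (fun C => (C ∩ S).card = j)).card with hf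
  set g := fun j => (M.filter (fun C => (C ∩ T).card = j)).card with hg
  -- bounds
  have hbound : ∀ (A : Finset V) (C : Finset V), (C ∩ A).card ≤ N := by
    intro A C
    calc (C ∩ A).card ≤ univ.card := Finset.card_le_univ _
    _ = N := Finset.card_univ
  have hfz : ∀ k, N < k → f k = 0 := by
    intro k hk
    rw [hf, Finset.card_eq_zero, Finset.filter_eq_empty_iff]
    intro C _
    have := hbound S C
    omega
  have hgz : ∀ k, N < k → g k = 0 := by
    intro k hk
    rw [hg, Finset.card_eq_zero, Finset.filter_eq_empty_iff]
    intro C _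
    have := hbound T C
    omega
  -- moments
  have hmom : ∀ (A : Finset V) (i : ℕ),
      ∑ k ∈ range (N+1), k.choose i * (M.filter (fun C => (C ∩ A).card = k)).card
        = ∑ C ∈ M, ((C ∩ A).card).choose i := by
    intro A i
    rw [← Finset.sum_fiberwise_of_maps_to (g := fun C => (C ∩ A).card)
      (t := range (N+1)) (fun C _ => Finset.mem_range.mpr (by simpa using Nat.lt_succ_of_le (hbound A C)))]
    apply Finset.sum_congr rfl
    intro k _
    rw [Finset.sum_congr rfl (fun C hC => by
      rw [(Finset.mem_filter.mp hC).2]), Finset.sum_const, smul_eq_mul, mul_comm]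
  have hmeq : ∀ i, ∑ k ∈ range (N+1), k.choose i * f k
      = ∑ k ∈ range (N+1), k.choose i * g k := by
    intro i
    rw [hf, hg, hmom S i, hmom T i]
    rcases Nat.eq_zero_or_pos i with hi | hi
    · subst hi; simp
    · obtain ⟨r, hr⟩ := hext i hi
      rw [double_count G S i r hr, double_count G T i r hr,
        clique_transport G S T e i]
  have hfg := binom_inversion N f g hfz hgz hmeq j
  -- convert ncard to filter card
  have conv : ∀ (A : Finset V),
      {C : Finset V | IsMaxCliqueF G C ∧ (C ∩ A).card = j}.ncard
        = (M.filter (fun C => (C ∩ A).card = j)).card := by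
    intro A
    have : {C : Finset V | IsMaxCliqueF G C ∧ (C ∩ A).card = j}
        = ↑(M.filter (fun C => (C ∩ A).card = j)) := by
      ext C
      simp [hM, Finset.mem_filter]
    rw [this, Set.ncard_coe_finset]
  rw [conv S, conv T]
  exact hfg
end

section
/- Let G be a finite vertex-transitive simple graph in which all maximal cliques have the same cardinality and which satisfies the uniform clique-extension property. Let ζ : ℕ → ℝ be arbitrary and define, for each subset S of the vertex set, q(S) = ∏_{C maximal clique of G} ζ(|C ∩ S|). Then q(S) = q(T) whenever the induced subgraphs G[S] and G[T] are isomorphic. (Interpretation: channel-state probabilities given by a symmetric Markov random field on G satisfy the isomorphism-invariance assumption.) -/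
open Finset

namespace Multiset

theorem sum_map_choose_eq_count {M : Multiset ℕ} {m : ℕ} (hM : ∀ x ∈ M, x ≤ m) :
    (M.map (·.choose m)).sum = M.count m := by
  induction M using Multiset.induction_on with
  | empty => simp
  | cons a M ih =>
    have ha : a ≤ m := hM a (mem_cons_self a M)
    rw [map_cons, sum_cons, count_cons, ih fun x hx => hM x (mem_cons_of_mem hx)]
    rcases ha.eq_or_lt with rfl | hlt
    · simp [add_comm]
    · simp [Nat.choose_eq_zero_of_lt hlt, hlt.ne']

theorem forall_le_of_sum_map_choose_eq {M N : Multiset ℕ} {m : ℕ} (hM : ∀ x ∈ M, x ≤ m)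
    (h : ∀ j, (M.map (·.choose j)).sum = (N.map (·.choose j)).sum) : ∀ y ∈ N, y ≤ m := by
  intro y hy
  by_contra! hmy
  have hMy : (M.map (·.choose y)).sum = 0 :=
    sum_eq_zero fun z hz => by
      obtain ⟨x, hx, rfl⟩ := mem_map.mp hz
      exact Nat.choose_eq_zero_of_lt ((hM x hx).trans_lt hmy)
  have hNy : 1 ≤ (N.map (·.choose y)).sum := by
    simpa using le_sum_of_mem (mem_map_of_mem (fun x : ℕ => x.choose y) hy)
  have := h y
  omega

theorem eq_of_sum_map_choose_eq {M N : Multiset ℕ}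
    (h : ∀ j, (M.map (·.choose j)).sum = (N.map (·.choose j)).sum) : M = N := by
  induction M using Multiset.strongInductionOn generalizing N with
  | ih M ih =>
  rcases eq_or_ne M 0 with rfl | hM0
  · simpa [eq_comm] using h 0
  -- Peel off the largest element `m` of `M`: on multisets bounded by `m`, the `m`-th moment
  -- counts the occurrences of `m`.
  obtain ⟨m, hmM, hmax⟩ : ∃ m ∈ M, ∀ x ∈ M, x ≤ m := exists_max_image id hM0
  have hN := forall_le_of_sum_map_choose_eq hmax h
  have hmN : m ∈ N := by
    rw [← count_pos, ← sum_map_choose_eq_count hN, ← h, sum_map_choose_eq_count hmax]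
    exact count_pos.mpr hmM
  have herase : M.erase m = N.erase m := by
    refine ih _ (erase_lt.mpr hmM) fun j => ?_
    have := h j
    rw [← sum_map_erase hmM, ← sum_map_erase hmN] at this
    omega
  rw [← cons_erase hmM, ← cons_erase hmN, herase]

end Multiset

namespace SimpleGraph

variable {V W : Type*} [Fintype V] [Fintype W] [DecidableEq V] [DecidableEq W]
  {G : SimpleGraph V} {H : SimpleGraph W} [DecidableRel G.Adj] [DecidableRel H.Adj]

theorem Embedding.card_cliqueFinset_le (f : G ↪g H) (n : ℕ) :
    #(G.cliqueFinset n) ≤ #(H.cliqueFinset n) := by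
  refine card_le_card_of_injOn (Finset.map f.toEmbedding) (fun s hs => ?_)
    (Finset.map_injective _).injOn
  have hle : G.map f.toEmbedding ≤ H :=
    (map_le_iff_le_comap _ _ _).mpr f.comap_eq.ge
  simpa using ((mem_cliqueFinset_iff.mp hs).map (f := f.toEmbedding)).mono hle

theorem Iso.card_cliqueFinset_eq (e : G ≃g H) (n : ℕ) :
    #(G.cliqueFinset n) = #(H.cliqueFinset n) :=
  (e.toEmbedding.card_cliqueFinset_le n).antisymm (e.symm.toEmbedding.card_cliqueFinset_le n)

theorem card_cliqueFinset_induce (S : Finset V) (n : ℕ) :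
    #((G.induce (S : Set V)).cliqueFinset n) = #{K ∈ G.cliqueFinset n | K ⊆ S} := by
  rw [← card_map ⟨Finset.map (.subtype _), Finset.map_injective _⟩]
  congr 1
  ext K
  simp only [mem_map, mem_cliqueFinset_iff, isNClique_induce_iff, Function.Embedding.coeFn_mk,
    mem_filter]
  constructor
  · rintro ⟨t, ht, rfl⟩
    refine ⟨ht, fun x hx => ?_⟩
    obtain ⟨y, -, rfl⟩ := mem_map.mp hx
    exact y.2
  · rintro ⟨hK, hKS⟩
    have hK' : (K.subtype (· ∈ (S : Set V))).map (.subtype _) = K :=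
      subtype_map_of_mem fun x hx => mem_coe.mpr (hKS hx)
    exact ⟨_, hK'.symm ▸ hK, hK'⟩

theorem sum_choose_card_inter_eq (𝓜 : Finset (Finset V))
    (h𝓜 : ∀ C ∈ 𝓜, G.IsClique (C : Set V)) {n r : ℕ} (hr : ∀ K, G.IsNClique n K → #{C ∈ 𝓜 | K ⊆ C} = r) (S : Finset V) :
    ∑ C ∈ 𝓜, (#(C ∩ S)).choose n = #{K ∈ G.cliqueFinset n | K ⊆ S} * r := by
  have hchoose : ∀ C ∈ 𝓜, (#(C ∩ S)).choose n =
      #(bipartiteAbove (fun C K => K ⊆ C) {K ∈ G.cliqueFinset n | K ⊆ S} C) := by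
    intro C hC
    rw [← card_powersetCard]
    congr 1
    ext K
    simp only [bipartiteAbove, mem_powersetCard, mem_filter, subset_inter_iff,
      mem_cliqueFinset_iff, isNClique_iff]
    constructor
    · rintro ⟨⟨hKC, hKS⟩, hK⟩
      exact ⟨⟨⟨(h𝓜 C hC).subset (by simpa using hKC), hK⟩, hKS⟩, hKC⟩
    · rintro ⟨⟨⟨-, hK⟩, hKS⟩, hKC⟩
      exact ⟨⟨hKC, hKS⟩, hK⟩
  rw [sum_congr rfl hchoose, sum_card_bipartiteAbove_eq_sum_card_bipartiteBelow]
  exact sum_const_nat fun K hK => hr K (mem_cliqueFinset_iff.mp (mem_filter.mp hK).1)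

end SimpleGraph

theorem UniformCliqueExtension.exists_card_filter_subset_eq {V : Type*} [Fintype V]
    [DecidableEq V] {G : SimpleGraph V} (hext : UniformCliqueExtension G)
    {MC : Finset (Finset V)} (hMC : ∀ C : Finset V, C ∈ MC ↔ IsMaxCliqueF G C)
    {n : ℕ} (hn : 1 ≤ n) : ∃ r, ∀ K, G.IsNClique n K → #{C ∈ MC | K ⊆ C} = r := by
  obtain ⟨r, hr⟩ := hext n hn
  refine ⟨r, fun K hK => ?_⟩
  rw [← hr K hK.isClique hK.card_eq, ← Set.ncard_coe_finset]
  congr 1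
  ext D
  simp [hMC]

theorem map_card_inter_eq_of_iso {V : Type*} [Fintype V] [DecidableEq V] {G : SimpleGraph V}
    (hext : UniformCliqueExtension G)
    {MC : Finset (Finset V)} (hMC : ∀ C : Finset V, C ∈ MC ↔ IsMaxCliqueF G C)
    {S T : Finset V} (e : G.induce (S : Set V) ≃g G.induce (T : Set V)) :
    MC.val.map (fun C => #(C ∩ S)) = MC.val.map (fun C => #(C ∩ T)) := by
  classical
  have hclique : ∀ C ∈ MC, G.IsClique (C : Set V) := fun C hC => ((hMC C).mp hC).1
  refine Multiset.eq_of_sum_map_choose_eq fun n => ?_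
  simp only [Multiset.map_map, Function.comp_def, ← sum_eq_multiset_sum]
  rcases Nat.eq_zero_or_pos n with rfl | hn
  · simp
  obtain ⟨r, hr⟩ := hext.exists_card_filter_subset_eq hMC hn
  rw [SimpleGraph.sum_choose_card_inter_eq MC hclique hr,
    SimpleGraph.sum_choose_card_inter_eq MC hclique hr,
    ← SimpleGraph.card_cliqueFinset_induce, ← SimpleGraph.card_cliqueFinset_induce,
    e.card_cliqueFinset_eq]

theorem stmt10_general {V : Type*} [Fintype V] [DecidableEq V] (G : SimpleGraph V)
    (hext : UniformCliqueExtension G)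
    (MC : Finset (Finset V)) (hMC : ∀ C : Finset V, C ∈ MC ↔ IsMaxCliqueF G C)
    (ζ : ℕ → ℝ) (q : Finset V → ℝ)
    (hq : ∀ S : Finset V, q S = ∏ C ∈ MC, ζ ((C ∩ S).card)) :
    ∀ S T : Finset V,
      Nonempty (G.induce (↑S : Set V) ≃g G.induce (↑T : Set V)) → q S = q T := by
  rintro S T ⟨e⟩
  have hsizes := congrArg (fun m => (m.map ζ).prod) (map_card_inter_eq_of_iso hext hMC e)
  simpa only [hq, prod_eq_multiset_prod, Multiset.map_map, Function.comp_def] using hsizes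

theorem stmt10 {V : Type*} [Fintype V] [DecidableEq V] (G : SimpleGraph V)
    (htrans : ∀ a b : V, ∃ F : G ≃g G, F a = b)
    (hext : UniformCliqueExtension G)
    (hsame : ∃ k : ℕ, ∀ C : Finset V, IsMaxCliqueF G C → C.card = k)
    (MC : Finset (Finset V)) (hMC : ∀ C : Finset V, C ∈ MC ↔ IsMaxCliqueF G C)
    (ζ : ℕ → ℝ) (q : Finset V → ℝ)
    (hq : ∀ S : Finset V, q S = ∏ C ∈ MC, ζ ((C ∩ S).card)) :
    ∀ S T : Finset V,
      Nonempty (G.induce (↑S : Set V) ≃g G.induce (↑T : Set V)) → q S = q T :=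
  stmt10_general G hext MC hMC ζ q hq
end

section
/- Let (t_{s,j}) be a solution of the system (dist)–(ne2), with the endpoints U_{s,j}, L_{s,j} defined by the stated recursion. If 1 ≤ k < j ≤ n and s ∈ {1,…,d} satisfy t_{s,k} > 0 and t_{s,j} = 0, then L_{s,k} ≥ U_{1,j}. -/
open Finset

theorem hasDerivAt_w (l m : ℕ) (x : ℝ) :
    HasDerivAt (w l m)
      ((m * (l - 1).choose m : ℕ) * x ^ (m - 1) * (1 - x) ^ (l - 1 - m)) x := by
  set N := l - 1
  -- the derivative of each Bernstein term is `b i - b (i + 1)`, so the sum telescopes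
  set b : ℕ → ℝ := fun i => ((i * N.choose i : ℕ) : ℝ) * x ^ (i - 1) * (1 - x) ^ (N - i) with hb
  have hterm : ∀ i ∈ Icc m N,
      HasDerivAt (fun y : ℝ => (N.choose i : ℝ) * y ^ i * (1 - y) ^ (N - i))
        (b i - b (i + 1)) x := by
    intro i hi
    have hiN : i ≤ N := (mem_Icc.1 hi).2
    have hsub : HasDerivAt (fun y : ℝ => 1 - y) (-1) x := by
      simpa using (hasDerivAt_id x).const_sub 1
    have hpow := ((hasDerivAt_pow i x).const_mul (N.choose i : ℝ)).fun_mul (hsub.pow (N - i))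
    refine hpow.congr_deriv ?_
    have hchoose : ((i + 1) * N.choose (i + 1) : ℕ) = N.choose i * (N - i) := by
      rw [mul_comm]; exact Nat.choose_succ_right_eq N i
    simp only [hb, hchoose, Pi.pow_apply, show N - (i + 1) = N - i - 1 by omega]
    push_cast [Nat.cast_sub hiN]
    ring
  have hsum : ∑ i ∈ Icc m N, (b i - b (i + 1)) = b m := by
    rcases le_or_gt m N with hmN | hNm
    · calc ∑ i ∈ Icc m N, (b i - b (i + 1)) = -∑ i ∈ Icc m N, (b (i + 1) - b i) := by
            rw [← sum_neg_distrib]; simp only [neg_sub]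
        _ = b m := by rw [sum_Icc_sub hmN]; simp [hb]
    · simp [hb, Icc_eq_empty_of_lt hNm, Nat.choose_eq_zero_of_lt hNm]
  have hw := HasDerivAt.fun_sum hterm
  rw [hsum] at hw
  exact hw

theorem w_monotoneOn (l m : ℕ) : MonotoneOn (w l m) (Set.Icc 0 1) := by
  have hderiv := hasDerivAt_w l m
  refine monotoneOn_of_deriv_nonneg (convex_Icc 0 1)
    (fun x _ => (hderiv x).continuousAt.continuousWithinAt)
    (fun x _ => (hderiv x).differentiableAt.differentiableWithinAt) fun x hx => ?_
  rw [interior_Icc, Set.mem_Ioo] at hx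
  have h1x : 0 ≤ 1 - x := by linarith [hx.2]
  have h0x : 0 ≤ x := hx.1.le
  rw [(hderiv x).deriv]
  positivity

theorem W_antitoneOn (l m : ℕ) : AntitoneOn (W l m) (Set.Icc 0 1) :=
  fun _ hx _ hy hxy => sub_le_sub_left (w_monotoneOn l m hx hy hxy) 1

theorem W_pos {l m : ℕ} (hm : 1 ≤ m) {x : ℝ} (hx0 : 0 ≤ x) (hx1 : x < 1) : 0 < W l m x := by
  set N := l - 1
  set p : ℕ → ℝ := fun i => (N.choose i : ℝ) * x ^ i * (1 - x) ^ (N - i)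
  have h1x : 0 < 1 - x := by linarith
  have hp : ∀ i, 0 ≤ p i := fun i => by positivity
  have htotal : ∑ i ∈ range (N + 1), p i = 1 := by
    simpa [p, mul_comm, mul_assoc, mul_left_comm] using (add_pow x (1 - x) N).symm
  -- every term of `w` has `i ≥ m ≥ 1`, so the term `p 0 = (1 - x) ^ N > 0` is missing
  have hw : w l m x ≤ ∑ i ∈ (range (N + 1)).erase 0, p i :=
    sum_le_sum_of_subset_of_nonneg
      (fun i hi => by simp only [mem_Icc, mem_erase, mem_range] at hi ⊢; omega) fun i _ _ => hp i
  have hp0 : 0 < p 0 := by simpa [p] using pow_pos h1x N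
  rw [← add_sum_erase _ _ (by simp : 0 ∈ range (N + 1))] at htotal
  unfold W
  linarith

theorem gam_eq_add_gam_succ {n j : ℕ} (q : ℕ → ℝ) (t : ℕ → ℕ → ℝ) (s : ℕ) (hj : j ≤ n) :
    gam n q t s j = t s j * q j + gam n q t s (j + 1) := by
  unfold gam
  rw [← insert_Icc_add_one_left_eq_Icc hj, sum_insert (by simp)]

/-- The endpoint recursion of one player `s`, with `U (i + 1)` in place of `L i` and weights
`a i = M_s W(γ_{s,i})`. The recursion is homogeneous in the weights, so the factor `M_s` is
harmless, and the equilibrium conditions become comparisons of the weights of two players. -/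
structure IsEndpoints (n : ℕ) (c v : ℝ) (f : ℕ → ℝ → ℝ) (a U : ℕ → ℝ) : Prop where
  weight_pos : ∀ i ∈ Icc 1 n, 0 < a i
  weight_le : ∀ i ∈ Icc 1 n, a i ≤ a (i + 1)
  start : U 1 = v
  step : ∀ i ∈ Icc 1 n, (f i (U (i + 1)) - c) * a (i + 1) = (f i (U i) - c) * a i

def payoff (c : ℝ) (f : ℕ → ℝ → ℝ) (a U : ℕ → ℝ) (i : ℕ) : ℝ := a i * (f i (U i) - c)

namespace IsEndpoints

variable {n : ℕ} {c v : ℝ} {f : ℕ → ℝ → ℝ} {a b U V : ℕ → ℝ}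

theorem weight_succ_pos (h : IsEndpoints n c v f a U) {i : ℕ} (hi : i ∈ Icc 1 n) :
    0 < a (i + 1) :=
  (h.weight_pos i hi).trans_le (h.weight_le i hi)

theorem cost_lt_succ_of_cost_lt (h : IsEndpoints n c v f a U) {i : ℕ} (hi : i ∈ Icc 1 n)
    (hc : c < f i (U i)) : c < f i (U (i + 1)) := by
  have hprod : 0 < (f i (U (i + 1)) - c) * a (i + 1) := by
    rw [h.step i hi]
    exact mul_pos (sub_pos.2 hc) (h.weight_pos i hi)
  exact sub_pos.1 (pos_of_mul_pos_left hprod (h.weight_succ_pos hi).le)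

theorem cost_lt (h : IsEndpoints n c v f a U)
    (hford : ∀ i ∈ Icc 1 n, ∀ j ∈ Icc 1 n, i < j → ∀ x : ℝ, f i x < f j x)
    (hcv : c < f 1 v) : ∀ i ∈ Icc 1 n, c < f i (U i) := by
  intro i hi
  induction i with
  | zero => simp at hi
  | succ i ih =>
    rcases Nat.eq_zero_or_pos i with rfl | hi0
    · rwa [h.start]
    · have him : i ∈ Icc 1 n := mem_Icc.2 ⟨hi0, by have := (mem_Icc.1 hi).2; omega⟩
      exact (h.cost_lt_succ_of_cost_lt him (ih him)).trans
        (hford i him (i + 1) hi (by omega) _)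

theorem cost_lt_succ (h : IsEndpoints n c v f a U)
    (hford : ∀ i ∈ Icc 1 n, ∀ j ∈ Icc 1 n, i < j → ∀ x : ℝ, f i x < f j x)
    (hcv : c < f 1 v) {i : ℕ} (hi : i ∈ Icc 1 n) : c < f i (U (i + 1)) :=
  h.cost_lt_succ_of_cost_lt hi (h.cost_lt hford hcv i hi)

theorem succ_le (h : IsEndpoints n c v f a U) (hf : ∀ i ∈ Icc 1 n, StrictMono (f i))
    (hford : ∀ i ∈ Icc 1 n, ∀ j ∈ Icc 1 n, i < j → ∀ x : ℝ, f i x < f j x)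
    (hcv : c < f 1 v) {i : ℕ} (hi : i ∈ Icc 1 n) : U (i + 1) ≤ U i := by
  have hc := h.cost_lt hford hcv i hi
  have hmul : (f i (U (i + 1)) - c) * a (i + 1) ≤ (f i (U i) - c) * a (i + 1) :=
    calc (f i (U (i + 1)) - c) * a (i + 1) = (f i (U i) - c) * a i := h.step i hi
      _ ≤ (f i (U i) - c) * a (i + 1) :=
        mul_le_mul_of_nonneg_left (h.weight_le i hi) (sub_pos.2 hc).le
  exact (hf i hi).le_iff_le.1 (by linarith [le_of_mul_le_mul_right hmul (h.weight_succ_pos hi)])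

theorem antitoneOn (h : IsEndpoints n c v f a U) (hf : ∀ i ∈ Icc 1 n, StrictMono (f i))
    (hford : ∀ i ∈ Icc 1 n, ∀ j ∈ Icc 1 n, i < j → ∀ x : ℝ, f i x < f j x)
    (hcv : c < f 1 v) : AntitoneOn U (Set.Icc 1 (n + 1)) := by
  intro i hi j hj hij
  induction j, hij using Nat.le_induction with
  | base => exact le_rfl
  | succ j hij ih =>
    have hj1 : 1 ≤ j := hi.1.trans hij
    have hjn : j ≤ n := by have := hj.2; omega
    exact (h.succ_le hf hford hcv (mem_Icc.2 ⟨hj1, hjn⟩)).trans (ih ⟨hj1, by omega⟩)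

theorem succ_eq_of_weight_eq (h : IsEndpoints n c v f a U)
    (hf : ∀ i ∈ Icc 1 n, StrictMono (f i)) {i : ℕ} (hi : i ∈ Icc 1 n)
    (ha : a (i + 1) = a i) : U (i + 1) = U i := by
  have hstep := h.step i hi
  rw [ha] at hstep
  exact (hf i hi).injective (by linarith [mul_right_cancel₀ (h.weight_pos i hi).ne' hstep])

theorem eq_of_weight_eq_on (h : IsEndpoints n c v f a U)
    (hf : ∀ i ∈ Icc 1 n, StrictMono (f i)) {p r : ℕ} (hp : 1 ≤ p) (hpr : p ≤ r) (hr : r ≤ n + 1)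
    (ha : ∀ i, p ≤ i → i < r → a (i + 1) = a i) : U r = U p := by
  induction r, hpr using Nat.le_induction with
  | base => rfl
  | succ r hpr ih =>
    rw [h.succ_eq_of_weight_eq hf (mem_Icc.2 ⟨by omega, by omega⟩) (ha r hpr (by omega)),
      ih (by omega) fun i h1 h2 => ha i h1 (by omega)]

theorem payoff_pos (h : IsEndpoints n c v f a U)
    (hford : ∀ i ∈ Icc 1 n, ∀ j ∈ Icc 1 n, i < j → ∀ x : ℝ, f i x < f j x)
    (hcv : c < f 1 v) {i : ℕ} (hi : i ∈ Icc 1 n) : 0 < payoff c f a U i :=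
  mul_pos (h.weight_pos i hi) (sub_pos.2 (h.cost_lt hford hcv i hi))

theorem payoff_ratio_lt_succ (hU : IsEndpoints n c v f a U) (hV : IsEndpoints n c v f b V)
    (hford : ∀ i ∈ Icc 1 n, ∀ j ∈ Icc 1 n, i < j → ∀ x : ℝ, f i x < f j x)
    (hcv : c < f 1 v)
    (hassum : ∀ i ∈ Icc 1 n, ∀ j ∈ Icc 1 n, i < j →
      ∀ x y : ℝ, y < x → c < f i y →
        (f i y - c) / (f j y - c) < (f i x - c) / (f j x - c))
    {i : ℕ} (hi : i ∈ Icc 1 n) (hi' : i + 1 ∈ Icc 1 n) (hUV : U (i + 1) < V (i + 1)) :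
    payoff c f a U i / payoff c f b V i < payoff c f a U (i + 1) / payoff c f b V (i + 1) := by
  have hratio := hassum i hi (i + 1) hi' (lt_add_one i) _ _ hUV (hU.cost_lt_succ hford hcv hi)
  rw [div_lt_div_iff₀ (sub_pos.2 (hU.cost_lt hford hcv _ hi'))
    (sub_pos.2 (hV.cost_lt hford hcv _ hi'))] at hratio
  have hweights := mul_pos (hU.weight_succ_pos hi) (hV.weight_succ_pos hi)
  -- by `step`, the payoffs at `i` are taken at `U (i + 1)`, `V (i + 1)` with the weights at `i + 1`
  rw [div_lt_div_iff₀ (hV.payoff_pos hford hcv hi) (hV.payoff_pos hford hcv hi')]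
  simp only [payoff, mul_comm (a i), mul_comm (b i), ← hU.step i hi, ← hV.step i hi]
  nlinarith [mul_lt_mul_of_pos_left hratio hweights]

theorem le_of_weight_eq_of_gap (hU : IsEndpoints n c v f a U) (hV : IsEndpoints n c v f b V)
    (hf : ∀ i ∈ Icc 1 n, StrictMono (f i))
    (hford : ∀ i ∈ Icc 1 n, ∀ j ∈ Icc 1 n, i < j → ∀ x : ℝ, f i x < f j x)
    (hcv : c < f 1 v)
    (hassum : ∀ i ∈ Icc 1 n, ∀ j ∈ Icc 1 n, i < j →
      ∀ x y : ℝ, y < x → c < f i y →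
        (f i y - c) / (f j y - c) < (f i x - c) / (f j x - c))
    {k j : ℕ} (hk : 1 ≤ k) (hkj : k < j) (hjn : j ≤ n) (hk_eq : a k = b k) (hj_le : a j ≤ b j)
    (hVU : V k ≤ U k) (hgap : ∀ i, k < i → i < j → a (i + 1) = a i) : V j ≤ U j := by
  -- Otherwise `U < V` on the whole gap, where `U` is constant, so the payoff ratio `ρ` increases
  -- strictly from `ρ k ≥ 1` to `ρ j < 1`.
  by_contra! hlt
  set ρ : ℕ → ℝ := fun i => payoff c f a U i / payoff c f b V i
  have hmem : ∀ i, k ≤ i → i ≤ j → i ∈ Icc 1 n := fun i h1 h2 => mem_Icc.2 ⟨by omega, by omega⟩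
  have hUV : ∀ i, k < i → i ≤ j → U i < V i := fun i h1 h2 => by
    rw [← hU.eq_of_weight_eq_on hf (by omega) h2 (by omega)
      fun i' h1' h2' => hgap i' (by omega) h2']
    exact hlt.trans_le (hV.antitoneOn hf hford hcv ⟨by omega, by omega⟩ ⟨by omega, by omega⟩ h2)
  have hρ_mono : ∀ i, k < i → i ≤ j → ρ k < ρ i := by
    intro i hki
    induction i, hki using Nat.le_induction with
    | base =>
      intro hi
      exact hU.payoff_ratio_lt_succ hV hford hcv hassum (hmem k le_rfl hkj.le)
        (hmem _ (by omega) hi) (hUV _ (by omega) hi)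
    | succ i hki ih =>
      intro hi
      exact (ih (by omega)).trans (hU.payoff_ratio_lt_succ hV hford hcv hassum
        (hmem i (by omega) (by omega)) (hmem _ (by omega) hi) (hUV _ (by omega) hi))
  have hρ_k : 1 ≤ ρ k := by
    rw [one_le_div (hV.payoff_pos hford hcv (hmem k le_rfl hkj.le))]
    simp only [payoff, hk_eq]
    exact mul_le_mul_of_nonneg_left (by linarith [(hf k (hmem k le_rfl hkj.le)).monotone hVU])
      (hk_eq ▸ hU.weight_pos k (hmem k le_rfl hkj.le)).le
  have hρ_j : ρ j < 1 := by
    have hj := hmem j hkj.le le_rfl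
    rw [div_lt_one (hV.payoff_pos hford hcv hj)]
    calc payoff c f a U j ≤ b j * (f j (U j) - c) :=
          mul_le_mul_of_nonneg_right hj_le (sub_pos.2 (hU.cost_lt hford hcv j hj)).le
      _ < payoff c f b V j := mul_lt_mul_of_pos_left (by linarith [hf j hj hlt])
          ((hU.weight_pos j hj).trans_le hj_le)
  linarith [hρ_mono j hkj le_rfl]

theorem le_of_weight_le (hU : IsEndpoints n c v f a U) (hV : IsEndpoints n c v f b V)
    (hf : ∀ i ∈ Icc 1 n, StrictMono (f i))
    (hford : ∀ i ∈ Icc 1 n, ∀ j ∈ Icc 1 n, i < j → ∀ x : ℝ, f i x < f j x)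
    (hcv : c < f 1 v)
    (hassum : ∀ i ∈ Icc 1 n, ∀ j ∈ Icc 1 n, i < j →
      ∀ x y : ℝ, y < x → c < f i y →
        (f i y - c) / (f j y - c) < (f i x - c) / (f j x - c))
    (hab : ∀ i ∈ Icc 1 n, a i ≤ b i) (hab_eq : ∀ i ∈ Icc 1 n, a i = b i ∨ a (i + 1) = a i) :
    ∀ j ∈ Icc 1 n, V j ≤ U j := by
  intro j hj
  induction j using Nat.strong_induction_on with
  | _ j ih =>
  obtain ⟨hj1, hjn⟩ := mem_Icc.1 hj
  -- go back from `j` to the last index `k` at which the weights agree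
  suffices h : ∀ k < j, (∀ i, k < i → i < j → a (i + 1) = a i) → V j ≤ U j from
    h (j - 1) (by omega) fun i h1 h2 => by omega
  intro k
  induction k with
  | zero =>
    intro _ hgap
    calc V j ≤ V 1 := hV.antitoneOn hf hford hcv ⟨le_rfl, by omega⟩ ⟨hj1, by omega⟩ hj1
      _ = U 1 := hV.start.trans hU.start.symm
      _ = U j := (hU.eq_of_weight_eq_on hf le_rfl hj1 (by omega)
          fun i h1 h2 => hgap i (by omega) h2).symm
  | succ k ihk =>
    intro hkj hgap
    have hk : k + 1 ∈ Icc 1 n := mem_Icc.2 ⟨by omega, by omega⟩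
    rcases hab_eq (k + 1) hk with heq | hconst
    · exact hU.le_of_weight_eq_of_gap hV hf hford hcv hassum (by omega) hkj hjn heq (hab j hj)
        (ih (k + 1) hkj hk) hgap
    · refine ihk (by omega) fun i h1 h2 => ?_
      rcases (Nat.succ_le_of_lt h1).eq_or_lt with rfl | h1'
      · exact hconst
      · exact hgap i h1' h2

end IsEndpoints

namespace IsSolution

variable {l m d n : ℕ} {M q : ℕ → ℝ} {t : ℕ → ℕ → ℝ} {s j : ℕ}

theorem le_one (hsol : IsSolution l m d n M q t) (hs : s ∈ Icc 1 d) (hj : j ∈ Icc 1 n) :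
    t s j ≤ 1 :=
  (hsol.2 j hj).1 ▸ single_le_sum (fun r hr => hsol.1 r hr j hj) hs

theorem gam_nonneg (hq : ∀ j ∈ Icc 1 n, 0 < q j) (hsol : IsSolution l m d n M q t)
    (hs : s ∈ Icc 1 d) (hj : 1 ≤ j) : 0 ≤ gam n q t s j :=
  sum_nonneg fun k hk =>
    have hk' : k ∈ Icc 1 n := Icc_subset_Icc_left hj hk
    mul_nonneg (hsol.1 s hs k hk') (hq k hk').le

theorem gam_lt_one (hq : ∀ j ∈ Icc 1 n, 0 < q j) (hqsum : ∑ j ∈ Icc 1 n, q j < 1)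
    (hsol : IsSolution l m d n M q t) (hs : s ∈ Icc 1 d) (hj : 1 ≤ j) : gam n q t s j < 1 :=
  calc gam n q t s j ≤ ∑ k ∈ Icc j n, q k := sum_le_sum fun k hk =>
        have hk' : k ∈ Icc 1 n := Icc_subset_Icc_left hj hk
        mul_le_of_le_one_left (hq k hk').le (hsol.le_one hs hk')
    _ ≤ ∑ k ∈ Icc 1 n, q k :=
        sum_le_sum_of_subset_of_nonneg (Icc_subset_Icc_left hj) fun k hk _ => (hq k hk).le
    _ < 1 := hqsum

theorem W_gam_pos (hm : 1 ≤ m) (hq : ∀ j ∈ Icc 1 n, 0 < q j)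
    (hqsum : ∑ j ∈ Icc 1 n, q j < 1) (hsol : IsSolution l m d n M q t) (hs : s ∈ Icc 1 d)
    (hj : 1 ≤ j) : 0 < W l m (gam n q t s j) :=
  W_pos hm (hsol.gam_nonneg hq hs hj) (hsol.gam_lt_one hq hqsum hs hj)

theorem W_gam_le_succ (hq : ∀ j ∈ Icc 1 n, 0 < q j) (hqsum : ∑ j ∈ Icc 1 n, q j < 1)
    (hsol : IsSolution l m d n M q t) (hs : s ∈ Icc 1 d) (hj : j ∈ Icc 1 n) :
    W l m (gam n q t s j) ≤ W l m (gam n q t s (j + 1)) := by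
  obtain ⟨hj1, hjn⟩ := mem_Icc.1 hj
  refine W_antitoneOn l m
    ⟨hsol.gam_nonneg hq hs (by omega), (hsol.gam_lt_one hq hqsum hs (by omega)).le⟩
    ⟨hsol.gam_nonneg hq hs hj1, (hsol.gam_lt_one hq hqsum hs hj1).le⟩ ?_
  rw [gam_eq_add_gam_succ q t s hjn]
  linarith [mul_nonneg (hsol.1 s hs j hj) (hq j hj).le]

theorem mul_W_le (hsol : IsSolution l m d n M q t) (hs : s ∈ Icc 1 d) (hj : j ∈ Icc 1 n) :
    M s * W l m (gam n q t s j) ≤ M 1 * W l m (gam n q t 1 j) := by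
  obtain ⟨dj, hdj, -, -, hequal, hchain⟩ := (hsol.2 j hj).2
  obtain ⟨hs1, hsd⟩ := mem_Icc.1 hs
  rcases le_or_gt s dj with hsdj | hdjs
  · exact (hequal s (mem_Icc.2 ⟨hs1, hsdj⟩)).le
  · have hdecr : ∀ r, dj ≤ r → r ≤ d →
        M r * W l m (gam n q t r j) ≤ M 1 * W l m (gam n q t 1 j) := by
      intro r hr
      induction r, hr using Nat.le_induction with
      | base => exact fun _ => (hequal dj (mem_Icc.2 ⟨(mem_Icc.1 hdj).1, le_rfl⟩)).le
      | succ r hr ih => exact fun hrd => (hchain r hr (by omega)).trans (ih (by omega))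
    exact hdecr s hdjs.le hsd

theorem mul_W_eq_or_gam_succ_eq (hsol : IsSolution l m d n M q t) (hs : s ∈ Icc 1 d)
    (hj : j ∈ Icc 1 n) :
    M s * W l m (gam n q t s j) = M 1 * W l m (gam n q t 1 j) ∨
      gam n q t s (j + 1) = gam n q t s j := by
  obtain ⟨dj, -, -, hzero, hequal, -⟩ := (hsol.2 j hj).2
  rcases le_or_gt s dj with hsdj | hdjs
  · exact Or.inl (hequal s (mem_Icc.2 ⟨(mem_Icc.1 hs).1, hsdj⟩))
  · right
    rw [gam_eq_add_gam_succ q t s (mem_Icc.1 hj).2, hzero s hs hdjs, zero_mul, zero_add]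

theorem isEndpoints {c v : ℝ} {f : ℕ → ℝ → ℝ} {U L : ℕ → ℕ → ℝ} (hm : 1 ≤ m)
    (hMpos : ∀ s ∈ Icc 1 d, 0 < M s) (hq : ∀ j ∈ Icc 1 n, 0 < q j)
    (hqsum : ∑ j ∈ Icc 1 n, q j < 1) (hsol : IsSolution l m d n M q t)
    (hU1 : ∀ s ∈ Icc 1 d, U s 1 = v)
    (hrecL : ∀ s ∈ Icc 1 d, ∀ j ∈ Icc 1 n,
      (f j (L s j) - c) * W l m (gam n q t s (j + 1)) = (f j (U s j) - c) * W l m (gam n q t s j))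
    (hrecU : ∀ s ∈ Icc 1 d, ∀ j ∈ Icc 1 n, U s (j + 1) = L s j) (hs : s ∈ Icc 1 d) :
    IsEndpoints n c v f (fun i => M s * W l m (gam n q t s i)) (U s) where
  weight_pos i hi := mul_pos (hMpos s hs) (hsol.W_gam_pos hm hq hqsum hs (mem_Icc.1 hi).1)
  weight_le i hi := mul_le_mul_of_nonneg_left (hsol.W_gam_le_succ hq hqsum hs hi) (hMpos s hs).le
  start := hU1 s hs
  step i hi := by
    rw [hrecU s hs i hi]
    linear_combination M s * hrecL s hs i hi

end IsSolution

theorem stmt12_general (l m d n : ℕ) (hm : 1 ≤ m)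
    (M q : ℕ → ℝ)
    (hMpos : ∀ s ∈ Finset.Icc 1 d, 0 < M s)
    (hq : ∀ j ∈ Finset.Icc 1 n, 0 < q j)
    (hqsum : ∑ j ∈ Finset.Icc 1 n, q j < 1)
    (c v : ℝ) (f : ℕ → ℝ → ℝ)
    (hfm : ∀ j ∈ Finset.Icc 1 n, StrictMono (f j))
    (hford : ∀ i ∈ Finset.Icc 1 n, ∀ j ∈ Finset.Icc 1 n, i < j → ∀ x : ℝ, f i x < f j x)
    (hfv : c < f 1 v)
    (hassum : ∀ i ∈ Finset.Icc 1 n, ∀ j ∈ Finset.Icc 1 n, i < j →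
      ∀ x y : ℝ, y < x → c < f i y →
        (f i y - c) / (f j y - c) < (f i x - c) / (f j x - c))
    (t : ℕ → ℕ → ℝ) (hsol : IsSolution l m d n M q t)
    (U L : ℕ → ℕ → ℝ)
    (hU1 : ∀ s ∈ Finset.Icc 1 d, U s 1 = v)
    (hrecL : ∀ s ∈ Finset.Icc 1 d, ∀ j ∈ Finset.Icc 1 n,
      (f j (L s j) - c) * W l m (gam n q t s (j + 1)) =
        (f j (U s j) - c) * W l m (gam n q t s j))
    (hrecU : ∀ s ∈ Finset.Icc 1 d, ∀ j ∈ Finset.Icc 1 n, U s (j + 1) = L s j)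
    (k j : ℕ) (hk1 : 1 ≤ k) (hkj : k < j) (hjn : j ≤ n)
    (s : ℕ) (hs : s ∈ Finset.Icc 1 d) :
    U 1 j ≤ L s k := by
  have h1 : 1 ∈ Icc 1 d := mem_Icc.2 ⟨le_rfl, (mem_Icc.1 hs).1.trans (mem_Icc.1 hs).2⟩
  have hEs := hsol.isEndpoints hm hMpos hq hqsum hU1 hrecL hrecU hs
  have hE1 := hsol.isEndpoints hm hMpos hq hqsum hU1 hrecL hrecU h1
  have hU_le : ∀ i ∈ Icc 1 n, U 1 i ≤ U s i :=
    hEs.le_of_weight_le hE1 hfm hford hfv hassum (fun i hi => hsol.mul_W_le hs hi)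
      fun i hi => (hsol.mul_W_eq_or_gam_succ_eq hs hi).imp id fun h => by simp only [h]
  calc U 1 j ≤ U s j := hU_le j (mem_Icc.2 ⟨by omega, hjn⟩)
    _ ≤ U s (k + 1) := hEs.antitoneOn hfm hford hfv ⟨by omega, by omega⟩ ⟨by omega, by omega⟩ hkj
    _ = L s k := hrecU s hs k (mem_Icc.2 ⟨hk1, by omega⟩)

theorem stmt12 (l m d n : ℕ) (hm : 1 ≤ m) (hml : m ≤ l - 1) (hd : 2 ≤ d) (hn : 1 ≤ n)
    (M q : ℕ → ℝ)
    (hM : ∀ s ∈ Finset.Icc 1 d, ∀ r ∈ Finset.Icc 1 d, s ≤ r → M r ≤ M s)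
    (hMpos : ∀ s ∈ Finset.Icc 1 d, 0 < M s)
    (hq : ∀ j ∈ Finset.Icc 1 n, 0 < q j)
    (hqsum : ∑ j ∈ Finset.Icc 1 n, q j < 1)
    (c v : ℝ) (f : ℕ → ℝ → ℝ)
    (hfc : ∀ j ∈ Finset.Icc 1 n, Continuous (f j))
    (hfm : ∀ j ∈ Finset.Icc 1 n, StrictMono (f j))
    (hfb : ∀ j ∈ Finset.Icc 1 n, Function.Bijective (f j))
    (hford : ∀ i ∈ Finset.Icc 1 n, ∀ j ∈ Finset.Icc 1 n, i < j → ∀ x : ℝ, f i x < f j x)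
    (hfv : c < f 1 v)
    (hassum : ∀ i ∈ Finset.Icc 1 n, ∀ j ∈ Finset.Icc 1 n, i < j →
      ∀ x y : ℝ, y < x → c < f i y →
        (f i y - c) / (f j y - c) < (f i x - c) / (f j x - c))
    (t : ℕ → ℕ → ℝ) (hsol : IsSolution l m d n M q t)
    (U L : ℕ → ℕ → ℝ)
    (hU1 : ∀ s ∈ Finset.Icc 1 d, U s 1 = v)
    (hrecL : ∀ s ∈ Finset.Icc 1 d, ∀ j ∈ Finset.Icc 1 n,
      (f j (L s j) - c) * W l m (gam n q t s (j + 1)) =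
        (f j (U s j) - c) * W l m (gam n q t s j))
    (hrecU : ∀ s ∈ Finset.Icc 1 d, ∀ j ∈ Finset.Icc 1 n, U s (j + 1) = L s j)
    (k j : ℕ) (hk1 : 1 ≤ k) (hkj : k < j) (hjn : j ≤ n)
    (s : ℕ) (hs : s ∈ Finset.Icc 1 d)
    (htk : 0 < t s k) (htj : t s j = 0) :
    U 1 j ≤ L s k :=
  stmt12_general l m d n hm M q hMpos hq hqsum c v f hfm hford hfv hassum t hsol U L hU1 hrecL hrecU
    k j hk1 hkj hjn s hs
end

section
/- Let M ≥ 2, let P_M be the path graph on {1,…,M}, let I₁ = {1,3,5,…} be the set of odd vertices and I₂ = {2,4,6,…} the set of even vertices. Then I₁ and I₂ are disjoint maximal independent sets of P_M whose union is {1,…,M}, with |I₁| = ⌈M/2⌉ and |I₂| = ⌊M/2⌋, and every independent set I of P_M satisfies |I ∩ I₁|/|I₁| + |I ∩ I₂|/|I₂| ≤ 1; that is, P_M is a mean valid graph with d = 2. -/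
/-- `I` is an independent set of the path graph on `{1, …, M}` (vertices `i` and `i+1`
adjacent for `1 ≤ i ≤ M-1`). -/
def PathIndep (M : ℕ) (I : Finset ℕ) : Prop :=
  I ⊆ Finset.Icc 1 M ∧ ∀ a ∈ I, a + 1 ∉ I

/-- `I` is a maximal independent set of the path graph on `{1, …, M}`. -/
def PathMaxIndep (M : ℕ) (I : Finset ℕ) : Prop :=
  PathIndep M I ∧ ∀ v ∈ Finset.Icc 1 M, v ∉ I → ¬ PathIndep M (insert v I)

/-!
Write `p = ⌈M/2⌉ = |I₁|` and `q = ⌊M/2⌋ = |I₂|`. An independent set of a path on `n` vertices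
has at most `⌈n/2⌉` vertices, so `|I| ≤ p`; if `I` avoids the even vertices the weighted sum is
`|I|/p ≤ 1`. If `I` contains an even vertex `e`, it misses `e + 1` and splits into independent
sets of the paths `1, …, e` and `e + 2, …, M`, both of even length, so `|I| ≤ q`; then the
weighted sum is at most `|I|/q ≤ 1` because `q ≤ p`.
-/

open Finset

lemma card_filter_odd_Icc (M : ℕ) : ((Icc 1 M).filter Odd).card = (M + 1) / 2 := by
  induction M with
  | zero => simp
  | succ n ih =>
    rw [← insert_Icc_right_eq_Icc_add_one (by omega), filter_insert]
    by_cases h : Odd (n + 1)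
    · rw [if_pos h, card_insert_of_notMem (by simp), ih]
      obtain ⟨k, hk⟩ := h; omega
    · rw [if_neg h, ih]
      obtain ⟨k, hk⟩ := Nat.not_odd_iff_even.mp h; omega

lemma card_filter_even_Icc (M : ℕ) : ((Icc 1 M).filter Even).card = M / 2 := by
  induction M with
  | zero => simp
  | succ n ih =>
    rw [← insert_Icc_right_eq_Icc_add_one (by omega), filter_insert]
    by_cases h : Even (n + 1)
    · rw [if_pos h, card_insert_of_notMem (by simp), ih]
      obtain ⟨k, hk⟩ := h; omega
    · rw [if_neg h, ih]
      obtain ⟨k, hk⟩ := Nat.not_even_iff_odd.mp h; omega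

lemma card_inter_Ico_le_of_forall_add_one_notMem {s : Finset ℕ} (hs : ∀ x ∈ s, x + 1 ∉ s)
    (a n : ℕ) : (s ∩ Ico a (a + n)).card ≤ (n + 1) / 2 := by
  -- `x ↦ (x - a) / 2` identifies only neighbouring points.
  have hinj : Set.InjOn (fun x => (x - a) / 2) ↑(s ∩ Ico a (a + n)) := by
    intro x hx y hy hxy
    simp only [coe_inter, coe_Ico, Set.mem_inter_iff, mem_coe, Set.mem_Ico] at hx hy hxy
    by_contra hne
    rcases (by omega : x + 1 = y ∨ y + 1 = x) with rfl | rfl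
    · exact hs x hx.1 hy.1
    · exact hs y hy.1 hx.1
  have hmaps : Set.MapsTo (fun x => (x - a) / 2) ↑(s ∩ Ico a (a + n)) ↑(range ((n + 1) / 2)) := by
    intro x hx
    simp only [coe_inter, coe_Ico, Set.mem_inter_iff, mem_coe, Set.mem_Ico, coe_range,
      Set.mem_Iio] at hx ⊢
    omega
  simpa using card_le_card_of_injOn _ hmaps hinj

namespace PathIndep

variable {M : ℕ} {I : Finset ℕ}

lemma card_le (hI : PathIndep M I) : I.card ≤ (M + 1) / 2 := by
  have h := card_inter_Ico_le_of_forall_add_one_notMem hI.2 1 M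
  rwa [inter_eq_left.mpr (hI.1.trans fun x hx => by simp at hx ⊢; omega)] at h

lemma card_le_of_even_mem (hI : PathIndep M I) {e : ℕ} (he : e ∈ I) (he_even : Even e) :
    I.card ≤ M / 2 := by
  have heM := mem_Icc.mp (hI.1 he)
  have hsplit : I ⊆ (I ∩ Ico 1 (1 + e)) ∪ (I ∩ Ico (e + 2) (e + 2 + (M - e - 1))) := by
    intro x hx
    have hxM := mem_Icc.mp (hI.1 hx)
    have hx_ne : x ≠ e + 1 := fun h => hI.2 e he (h ▸ hx)
    simp only [mem_union, mem_inter, mem_Ico, hx, true_and]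
    omega
  have hleft := card_inter_Ico_le_of_forall_add_one_notMem hI.2 1 e
  have hright := card_inter_Ico_le_of_forall_add_one_notMem hI.2 (e + 2) (M - e - 1)
  obtain ⟨k, rfl⟩ := he_even
  have := (card_le_card hsplit).trans (card_union_le _ _)
  omega

lemma div_add_div_le_one (hM : 2 ≤ M) (hI : PathIndep M I) :
    ((I ∩ (Icc 1 M).filter Odd).card : ℝ) / ((M + 1) / 2 : ℕ)
      + ((I ∩ (Icc 1 M).filter Even).card : ℝ) / (M / 2 : ℕ) ≤ 1 := by
  set a := (I ∩ (Icc 1 M).filter Odd).card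
  set b := (I ∩ (Icc 1 M).filter Even).card
  have hab : a + b ≤ I.card := by
    rw [← card_union_of_disjoint]
    · exact card_le_card (union_subset inter_subset_left inter_subset_left)
    · refine disjoint_left.mpr fun x hxa hxb => ?_
      exact Nat.not_even_iff_odd.mpr (mem_filter.mp (mem_inter.mp hxa).2).2
        (mem_filter.mp (mem_inter.mp hxb).2).2
  have hq : (0 : ℝ) < (M / 2 : ℕ) := by exact_mod_cast (by omega : 0 < M / 2)
  have hqp : ((M / 2 : ℕ) : ℝ) ≤ ((M + 1) / 2 : ℕ) := by exact_mod_cast (by omega)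
  rcases Nat.eq_zero_or_pos b with hb | hb
  · rw [hb, Nat.cast_zero, zero_div, add_zero, div_le_one (hq.trans_le hqp)]
    exact_mod_cast (by have := hI.card_le; omega)
  · obtain ⟨e, he⟩ := card_pos.mp hb
    simp only [mem_inter, mem_filter] at he
    have hIq : a + b ≤ M / 2 := hab.trans (hI.card_le_of_even_mem he.1 he.2.2)
    calc (a : ℝ) / ((M + 1) / 2 : ℕ) + b / (M / 2 : ℕ)
        ≤ a / (M / 2 : ℕ) + b / (M / 2 : ℕ) := by gcongr
      _ = (a + b : ℕ) / (M / 2 : ℕ) := by push_cast; ring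
      _ ≤ 1 := by rw [div_le_one hq]; exact_mod_cast hIq

end PathIndep

lemma pathIndep_filter_Icc {M : ℕ} {P : ℕ → Prop} [DecidablePred P]
    (hP : ∀ x, P x → ¬ P (x + 1)) : PathIndep M ((Icc 1 M).filter P) :=
  ⟨filter_subset _ _, fun x hx hx1 => hP x (mem_filter.mp hx).2 (mem_filter.mp hx1).2⟩

lemma PathIndep.pathMaxIndep {M : ℕ} {I : Finset ℕ} (hI : PathIndep M I)
    (hdom : ∀ v ∈ Icc 1 M, v ∉ I → v + 1 ∈ I ∨ ∃ u ∈ I, u + 1 = v) : PathMaxIndep M I := by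
  refine ⟨hI, fun v hv hvI hins => ?_⟩
  rcases hdom v hv hvI with hv1 | ⟨u, hu, rfl⟩
  · exact hins.2 v (mem_insert_self v I) (mem_insert_of_mem hv1)
  · exact hins.2 u (mem_insert_of_mem hu) (mem_insert_self _ I)

lemma pathMaxIndep_filter_odd (M : ℕ) : PathMaxIndep M ((Icc 1 M).filter Odd) := by
  refine (pathIndep_filter_Icc fun x hx h => Nat.odd_add_one.mp h hx).pathMaxIndep ?_
  intro v hv hvI
  have hv := mem_Icc.mp hv
  obtain ⟨k, rfl⟩ := Nat.not_odd_iff_even.mp fun h => hvI (mem_filter.mpr ⟨mem_Icc.mpr hv, h⟩)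
  exact Or.inr ⟨2 * k - 1, mem_filter.mpr ⟨mem_Icc.mpr (by omega), ⟨k - 1, by omega⟩⟩, by omega⟩

lemma pathMaxIndep_filter_even {M : ℕ} (hM : 2 ≤ M) :
    PathMaxIndep M ((Icc 1 M).filter Even) := by
  refine (pathIndep_filter_Icc fun x hx h => Nat.even_add_one.mp h hx).pathMaxIndep ?_
  intro v hv hvI
  have hv := mem_Icc.mp hv
  obtain ⟨k, rfl⟩ := Nat.not_even_iff_odd.mp fun h => hvI (mem_filter.mpr ⟨mem_Icc.mpr hv, h⟩)
  by_cases hvM : 2 * k + 1 < M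
  · exact Or.inl (mem_filter.mpr ⟨mem_Icc.mpr (by omega), ⟨k + 1, by omega⟩⟩)
  · exact Or.inr ⟨2 * k, mem_filter.mpr ⟨mem_Icc.mpr (by omega), ⟨k, by omega⟩⟩, rfl⟩

theorem stmt18 (M : ℕ) (hM : 2 ≤ M)
    (I₁ I₂ : Finset ℕ)
    (hI₁ : I₁ = (Finset.Icc 1 M).filter (fun i => Odd i))
    (hI₂ : I₂ = (Finset.Icc 1 M).filter (fun i => Even i)) :
    Disjoint I₁ I₂ ∧
    I₁ ∪ I₂ = Finset.Icc 1 M ∧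
    PathMaxIndep M I₁ ∧
    PathMaxIndep M I₂ ∧
    I₁.card = (M + 1) / 2 ∧
    I₂.card = M / 2 ∧
    (∀ I : Finset ℕ, PathIndep M I →
      ((I ∩ I₁).card : ℝ) / (I₁.card : ℝ) + ((I ∩ I₂).card : ℝ) / (I₂.card : ℝ) ≤ 1) := by
  subst hI₁ hI₂
  refine ⟨disjoint_filter.mpr fun x _ => Nat.not_even_iff_odd.mpr, ?_,
    pathMaxIndep_filter_odd M, pathMaxIndep_filter_even hM,
    card_filter_odd_Icc M, card_filter_even_Icc M, fun I hI => ?_⟩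
  · rw [filter_union_right]
    exact filter_true_of_mem fun x _ => (Nat.even_or_odd x).symm
  · rw [card_filter_odd_Icc, card_filter_even_Icc]
    exact hI.div_add_div_le_one hM
end
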